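/- arXiv:2507.11780 — 10 statements merged into one kernel-verified Lean document; each statement's English description precedes it below -/
import Mathlib

section
/- For every β > 0, every N ≥ 2, every u ∈ ℝ^N and every index k ∈ {1,...,N}, the k-th partial derivative of the softmax operator satisfies ∂_k sm^β(u) = w_k^β(u)·[1 + β(u_k − sm^β(u))], and moreover sup over u ∈ ℝ^N of the sup-norm of the gradient satisfies ‖∇sm^β(u)‖_∞ ≤ 1 + log N. -/
/-- The softmax operator `sm^β(u) = (∑ i, u i · exp(β u i)) / (∑ j, exp(β u j))`. -/
noncomputable def sm (N : ℕ) (β : ℝ) (u : Fin N → ℝ) : ℝ :=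
  (∑ i, u i * Real.exp (β * u i)) / ∑ j, Real.exp (β * u j)

/-- The softmax weights `w_i^β(u) = exp(β u i) / ∑ j, exp(β u j)`. -/
noncomputable def smw (N : ℕ) (β : ℝ) (u : Fin N → ℝ) (i : Fin N) : ℝ :=
  Real.exp (β * u i) / ∑ j, Real.exp (β * u j)

lemma hasDerivAt_mul_exp (β x : ℝ) :
    HasDerivAt (fun t : ℝ => t * Real.exp (β * t))
      (Real.exp (β * x) * (1 + β * x)) x := by
  have h := (hasDerivAt_id x).mul (((hasDerivAt_id x).const_mul β).exp)
  refine h.congr_deriv ?_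
  simp only [id_eq, one_mul, mul_one]
  ring

lemma hasDerivAt_exp_mul (β x : ℝ) :
    HasDerivAt (fun t : ℝ => Real.exp (β * t)) (β * Real.exp (β * x)) x := by
  have h := ((hasDerivAt_id x).const_mul β).exp
  refine h.congr_deriv ?_
  simp only [id_eq, one_mul, mul_one]
  ring

lemma softmax_deriv_aux (N : ℕ) (hN : 2 ≤ N) (β : ℝ) (u : Fin N → ℝ) (k : Fin N) :
    HasDerivAt (fun t => sm N β (Function.update u k t))
      (smw N β u k * (1 + β * (u k - sm N β u))) (u k) := by
  have hNpos : 0 < N := by omega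
  have hne : Nonempty (Fin N) := ⟨⟨0, hNpos⟩⟩
  have hZ : 0 < ∑ j, Real.exp (β * u j) :=
    Finset.sum_pos (fun i _ => Real.exp_pos _) Finset.univ_nonempty
  -- derivative of the numerator
  have hA : HasDerivAt
      (fun t => ∑ i, (Function.update u k t) i * Real.exp (β * (Function.update u k t) i))
      (Real.exp (β * u k) * (1 + β * u k)) (u k) := by
    have h : ∀ i : Fin N, HasDerivAt
        (fun t => (Function.update u k t) i * Real.exp (β * (Function.update u k t) i))
        (if i = k then Real.exp (β * u k) * (1 + β * u k) else 0) (u k) := by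
      intro i
      by_cases hik : i = k
      · subst hik
        simp only [Function.update_self, if_pos]
        simpa using hasDerivAt_mul_exp β (u i)
      · simp only [Function.update_of_ne hik, hik, if_false]
        exact hasDerivAt_const _ _
    have h2 := HasDerivAt.fun_sum (fun i (_ : i ∈ Finset.univ) => h i)
    simpa using h2
  -- derivative of the denominator
  have hS : HasDerivAt
      (fun t => ∑ j, Real.exp (β * (Function.update u k t) j))
      (β * Real.exp (β * u k)) (u k) := by
    have h : ∀ i : Fin N, HasDerivAt
        (fun t => Real.exp (β * (Function.update u k t) i))
        (if i = k then β * Real.exp (β * u k) else 0) (u k) := by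
      intro i
      by_cases hik : i = k
      · subst hik
        simp only [Function.update_self, if_pos]
        simpa using hasDerivAt_exp_mul β (u i)
      · simp only [Function.update_of_ne hik, hik, if_false]
        exact hasDerivAt_const _ _
    have h2 := HasDerivAt.fun_sum (fun i (_ : i ∈ Finset.univ) => h i)
    simpa using h2
  have hSne : (∑ j, Real.exp (β * (Function.update u k (u k)) j)) ≠ 0 := by
    rw [Function.update_eq_self]
    exact ne_of_gt hZ
  have hdiv := hA.div hS hSne
  have hupd : Function.update u k (u k) = u := Function.update_eq_self k u
  rw [hupd] at hdiv
  refine hdiv.congr_deriv ?_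
  simp only [sm, smw]
  field_simp
  ring

lemma softmax_bound_aux (N : ℕ) (hN : 2 ≤ N) (β : ℝ) (hβ : 0 < β) (v : Fin N → ℝ)
    (j : Fin N) :
    |smw N β v j * (1 + β * (v j - sm N β v))| ≤ 1 + Real.log N := by
  have hNpos : 0 < N := by omega
  have hne : Nonempty (Fin N) := ⟨⟨0, hNpos⟩⟩
  set Z := ∑ i, Real.exp (β * v i) with hZdef
  have hZ : 0 < Z := Finset.sum_pos (fun i _ => Real.exp_pos _) Finset.univ_nonempty
  set w : Fin N → ℝ := smw N β v with hwdef
  have hw0 : ∀ i, 0 < w i := fun i => div_pos (Real.exp_pos _) hZ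
  have hwsum : ∑ i, w i = 1 := by
    simp only [hwdef, smw, ← hZdef]
    rw [← Finset.sum_div]
    exact div_self (ne_of_gt hZ)
  have hw1 : ∀ i, w i ≤ 1 := by
    intro i
    rw [hwdef]
    show Real.exp (β * v i) / Z ≤ 1
    rw [div_le_one hZ]
    exact Finset.single_le_sum (f := fun i => Real.exp (β * v i))
      (fun i _ => (Real.exp_pos _).le) (Finset.mem_univ i)
  have hexple : ∀ i, Real.exp (β * v i) ≤ Z :=
    fun i => Finset.single_le_sum (f := fun i => Real.exp (β * v i))
      (fun i _ => (Real.exp_pos _).le) (Finset.mem_univ i)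
  have hsm : sm N β v = ∑ i, w i * v i := by
    simp only [sm, ← hZdef, hwdef, smw]
    rw [Finset.sum_div]
    congr 1; ext i; ring
  have hlogw : ∀ i, Real.log (w i) = β * v i - Real.log Z := by
    intro i
    rw [hwdef]
    show Real.log (Real.exp (β * v i) / Z) = _
    rw [Real.log_div (ne_of_gt (Real.exp_pos _)) (ne_of_gt hZ), Real.log_exp]
  have hlogN0 : 0 ≤ Real.log N := Real.log_nonneg (by exact_mod_cast hNpos)
  -- Jensen / entropy bound: ∑ w i * (- log (w i)) ≤ log N
  have hjensen : ∑ i, w i * (-Real.log (w i)) ≤ Real.log N := by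
    have hconc : ConcaveOn ℝ (Set.Ioi (0:ℝ)) Real.log :=
      strictConcaveOn_log_Ioi.concaveOn
    have := hconc.le_map_sum (t := Finset.univ) (w := w) (p := fun i => (w i)⁻¹)
      (fun i _ => (hw0 i).le) hwsum
      (fun i _ => Set.mem_Ioi.2 (inv_pos.2 (hw0 i)))
    simp only [smul_eq_mul] at this
    have hsum1 : ∑ i, w i * (w i)⁻¹ = (N : ℝ) := by
      have : ∀ i : Fin N, w i * (w i)⁻¹ = 1 := fun i => mul_inv_cancel₀ (ne_of_gt (hw0 i))
      simp [this]
    rw [hsum1] at this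
    calc ∑ i, w i * (-Real.log (w i)) = ∑ i, w i * Real.log (w i)⁻¹ := by
          simp [Real.log_inv]
      _ ≤ Real.log N := this
  -- key1 : β * (v j - sm) ≤ log N
  have key1 : β * (v j - sm N β v) ≤ Real.log N := by
    have hsm' : β * sm N β v = ∑ i, w i * Real.log (w i) + Real.log Z := by
      rw [hsm, Finset.mul_sum]
      have : ∑ i, w i * Real.log (w i) + Real.log Z
          = ∑ i, (w i * Real.log (w i) + w i * Real.log Z) := by
        rw [Finset.sum_add_distrib, ← Finset.sum_mul, hwsum, one_mul]
      rw [this]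
      congr 1; ext i
      rw [hlogw i]; ring
    have hlogwj : Real.log (w j) ≤ 0 := Real.log_nonpos (hw0 j).le (hw1 j)
    have h1 : β * (v j - sm N β v)
        = Real.log (w j) + ∑ i, w i * (-Real.log (w i)) := by
      have := hlogw j
      rw [mul_sub, hsm']
      have hsplit : ∑ i, w i * (-Real.log (w i)) = -∑ i, w i * Real.log (w i) := by
        rw [← Finset.sum_neg_distrib]; congr 1; ext i; ring
      rw [hsplit]
      linarith [hlogw j]
    rw [h1]
    linarith [hjensen]
  -- key2 : w j * (β * (sm - v j)) ≤ exp (-1)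
  have key2 : w j * (β * (sm N β v - v j)) ≤ Real.exp (-1) := by
    have hterm : ∀ i : Fin N, w j * (β * (v i - v j)) ≤ Real.exp (-1) := by
      intro i
      set x := β * (v i - v j) with hx
      by_cases hxpos : 0 ≤ x
      · have hwle : w j ≤ Real.exp (-x) := by
          rw [hwdef]
          show Real.exp (β * v j) / Z ≤ Real.exp (-x)
          rw [div_le_iff₀ hZ]
          calc Real.exp (β * v j) = Real.exp (-x) * Real.exp (β * v i) := by
                rw [← Real.exp_add]; congr 1; rw [hx]; ring
            _ ≤ Real.exp (-x) * Z := by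
                exact mul_le_mul_of_nonneg_left (hexple i) (Real.exp_pos _).le
        have hx1 : x ≤ Real.exp (x - 1) := by
          have := Real.add_one_le_exp (x - 1)
          linarith
        calc w j * x ≤ Real.exp (-x) * x :=
              mul_le_mul_of_nonneg_right hwle hxpos
          _ ≤ Real.exp (-x) * Real.exp (x - 1) :=
              mul_le_mul_of_nonneg_left hx1 (Real.exp_pos _).le
          _ = Real.exp (-1) := by rw [← Real.exp_add]; congr 1; ring
      · have : w j * x ≤ 0 :=
          mul_nonpos_of_nonneg_of_nonpos (hw0 j).le (by linarith)
        linarith [Real.exp_pos (-1 : ℝ)]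
    have hsumeq : w j * (β * (sm N β v - v j)) = ∑ i, w i * (w j * (β * (v i - v j))) := by
      rw [hsm]
      have h1 : ∑ i, w i * (w j * (β * (v i - v j)))
          = w j * β * ((∑ i, w i * v i) - (∑ i, w i) * v j) := by
        rw [Finset.sum_mul, ← Finset.sum_sub_distrib, Finset.mul_sum]
        exact Finset.sum_congr rfl (fun i _ => by ring)
      rw [h1, hwsum]; ring
    rw [hsumeq]
    calc ∑ i, w i * (w j * (β * (v i - v j)))
        ≤ ∑ i, w i * Real.exp (-1) :=
          Finset.sum_le_sum (fun i _ => mul_le_mul_of_nonneg_left (hterm i) (hw0 i).le)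
      _ = Real.exp (-1) := by rw [← Finset.sum_mul, hwsum, one_mul]
  -- assemble
  have hexp1 : Real.exp (-1 : ℝ) ≤ 1 := by
    rw [show (1:ℝ) = Real.exp 0 by rw [Real.exp_zero]]
    exact Real.exp_le_exp.2 (by norm_num)
  rw [abs_le]
  constructor
  · -- lower bound
    have h1 : -(w j * (1 + β * (v j - sm N β v)))
        = w j * (β * (sm N β v - v j)) - w j := by ring
    nlinarith [key2, hw0 j, hexp1, hlogN0]
  · -- upper bound
    nlinarith [key1, hw0 j, hw1 j, hlogN0]

/-- the `k`-th partial derivative of the softmax operator equals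
`w_k^β(u)·[1 + β(u_k − sm^β(u))]`, and every coordinate of the gradient (hence its sup-norm)
is bounded by `1 + log N`, uniformly over `u ∈ ℝ^N`. -/
theorem softmax_partial_deriv_and_grad_bound
    (N : ℕ) (hN : 2 ≤ N) (β : ℝ) (hβ : 0 < β) (u : Fin N → ℝ) (k : Fin N) :
    HasDerivAt (fun t => sm N β (Function.update u k t))
      (smw N β u k * (1 + β * (u k - sm N β u))) (u k) ∧
    ∀ (v : Fin N → ℝ) (j : Fin N),
      |smw N β v j * (1 + β * (v j - sm N β v))| ≤ 1 + Real.log N := by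
  exact ⟨softmax_deriv_aux N hN β u k,
    fun v j => softmax_bound_aux N hN β hβ v j⟩
end

section
/- For every β > 0 and N ≥ 2, the softmax operator sm^β is Lipschitz continuous on ℝ^N with Lipschitz constant L = √N·(1 + log N); that is, for all u, u′ ∈ ℝ^N, |sm^β(u) − sm^β(u′)| ≤ √N·(1 + log N)·‖u − u′‖₂. -/
private lemma te_le_log_two {t : ℝ} (ht : 0 ≤ t) : t * Real.exp (-t) ≤ Real.log 2 := by
  have h1 : t ≤ Real.exp (t - 1) := by
    have := Real.add_one_le_exp (t - 1); linarith
  have h2 : t * Real.exp (-t) ≤ Real.exp (-1 : ℝ) := by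
    calc t * Real.exp (-t) ≤ Real.exp (t - 1) * Real.exp (-t) :=
          mul_le_mul_of_nonneg_right h1 (Real.exp_nonneg _)
      _ = Real.exp (-1 : ℝ) := by rw [← Real.exp_add]; ring_nf
  have h3 : Real.exp (-1 : ℝ) ≤ 1 / 2 := by
    rw [Real.exp_neg]
    have : (2 : ℝ) ≤ Real.exp 1 := by have := Real.add_one_le_exp (1 : ℝ); linarith
    rw [inv_le_iff_one_le_mul₀ (Real.exp_pos 1)]
    linarith
  have h4 : (1 / 2 : ℝ) ≤ Real.log 2 := by
    have := Real.log_le_sub_one_of_pos (x := (1/2 : ℝ)) (by norm_num)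
    have h5 : Real.log (1/2 : ℝ) = - Real.log 2 := by rw [one_div, Real.log_inv]
    linarith
  linarith

private lemma grad_bound {N : ℕ} (hN : 2 ≤ N) {β : ℝ} (hβ : 0 < β) (v : Fin N → ℝ) (i : Fin N) :
    Real.exp (β * v i) / (∑ j, Real.exp (β * v j)) * |1 + β * (v i - sm N β v)| ≤
      1 + Real.log N := by
  set Z : ℝ := ∑ j, Real.exp (β * v j) with hZdef
  have hNe : (Finset.univ : Finset (Fin N)).Nonempty := by
    refine Finset.univ_nonempty_iff.mpr ?_
    exact Fin.pos_iff_nonempty.mp (by omega)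
  have hZ : 0 < Z := Finset.sum_pos (fun j _ => Real.exp_pos _) hNe
  set w : Fin N → ℝ := fun j => Real.exp (β * v j) / Z with hwdef
  have hwpos : ∀ j, 0 < w j := fun j => div_pos (Real.exp_pos _) hZ
  have hw1 : ∑ j, w j = 1 := by
    rw [← Finset.sum_div]; exact div_self (ne_of_gt hZ)
  have hlogw : ∀ j, Real.log (w j) = β * v j - Real.log Z := by
    intro j
    rw [hwdef]
    rw [Real.log_div (ne_of_gt (Real.exp_pos _)) (ne_of_gt hZ), Real.log_exp]
  have hsm : sm N β v = ∑ j, w j * v j := by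
    rw [sm, ← hZdef, Finset.sum_div]
    exact Finset.sum_congr rfl fun j _ => by simp only [hwdef]; ring
  -- entropy bound : ∑ w log (1/w) ≤ log N
  have hent : ∑ j, w j * (- Real.log (w j)) ≤ Real.log N := by
    have hjen := (strictConcaveOn_log_Ioi.concaveOn).le_map_sum
      (t := (Finset.univ : Finset (Fin N))) (w := w) (p := fun j => (w j)⁻¹)
      (fun j _ => (hwpos j).le) hw1 (fun j _ => Set.mem_Ioi.mpr (inv_pos.mpr (hwpos j)))
    have hsum1 : ∑ j, w j • (w j)⁻¹ = (N : ℝ) := by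
      rw [Finset.sum_congr rfl fun j _ => by
        rw [smul_eq_mul, mul_inv_cancel₀ (ne_of_gt (hwpos j))]]
      simp
    calc ∑ j, w j * (- Real.log (w j)) = ∑ j, w j • Real.log ((w j)⁻¹) := by
          refine Finset.sum_congr rfl fun j _ => ?_
          rw [Real.log_inv, smul_eq_mul]
      _ ≤ Real.log (∑ j, w j • (w j)⁻¹) := hjen
      _ = Real.log N := by rw [hsum1]
  -- lower bound: log Z - log N ≤ β * sm
  have hlow : Real.log Z - Real.log N ≤ β * sm N β v := by
    have : β * sm N β v = ∑ j, w j * Real.log (w j) + Real.log Z := by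
      rw [hsm, Finset.mul_sum]
      have : ∑ j, w j * Real.log (w j) = ∑ j, (w j * (β * v j) - w j * Real.log Z) := by
        refine Finset.sum_congr rfl fun j _ => ?_
        rw [hlogw j]; ring
      rw [this, Finset.sum_sub_distrib, ← Finset.sum_mul, hw1]
      ring_nf
    have h2 : - Real.log N ≤ ∑ j, w j * Real.log (w j) := by
      have := hent
      simp only [mul_neg, Finset.sum_neg_distrib] at this
      linarith
    linarith
  -- upper bounds
  have hvle : ∀ j, β * v j ≤ Real.log Z := by
    intro j
    have h1 : Real.exp (β * v j) ≤ Z :=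
      Finset.single_le_sum (fun k _ => (Real.exp_pos (β * v k)).le) (Finset.mem_univ j)
    calc β * v j = Real.log (Real.exp (β * v j)) := (Real.log_exp _).symm
      _ ≤ Real.log Z := Real.log_le_log (Real.exp_pos _) h1
  have hup : β * sm N β v ≤ Real.log Z := by
    rw [hsm, Finset.mul_sum]
    calc ∑ j, β * (w j * v j) = ∑ j, w j * (β * v j) := by
          refine Finset.sum_congr rfl fun j _ => by ring
      _ ≤ ∑ j, w j * Real.log Z := by
          refine Finset.sum_le_sum fun j _ => ?_
          exact mul_le_mul_of_nonneg_left (hvle j) (hwpos j).le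
      _ = Real.log Z := by rw [← Finset.sum_mul, hw1, one_mul]
  have hlog2 : Real.log 2 ≤ Real.log N := by
    refine Real.log_le_log (by norm_num) ?_
    exact_mod_cast hN
  -- main bound: w i * |β (v i - sm)| ≤ log N
  have hkey : w i * |β * (v i - sm N β v)| ≤ Real.log N := by
    rcases le_total (sm N β v) (v i) with h | h
    · rw [abs_of_nonneg (by nlinarith)]
      have h1 : β * (v i - sm N β v) ≤ Real.log N := by
        have := hvle i; nlinarith
      have h2 : w i ≤ 1 := by
        rw [div_le_one hZ]
        exact Finset.single_le_sum (fun k _ => (Real.exp_pos (β * v k)).le) (Finset.mem_univ i)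
      have h3 : 0 ≤ β * (v i - sm N β v) := by nlinarith
      nlinarith
    · rw [abs_of_nonpos (by nlinarith), hwdef]
      set t : ℝ := Real.log Z - β * v i with htdef
      have ht : 0 ≤ t := by have := hvle i; simp [htdef]; linarith
      have hexpt : Real.exp (β * v i) / Z = Real.exp (-t) := by
        rw [htdef, neg_sub, Real.exp_sub, Real.exp_log hZ]
      have hle : -(β * (v i - sm N β v)) ≤ t := by
        rw [htdef]; have := hup; nlinarith
      calc Real.exp (β * v i) / Z * -(β * (v i - sm N β v))
          ≤ Real.exp (β * v i) / Z * t := by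
            refine mul_le_mul_of_nonneg_left hle (by positivity)
        _ = t * Real.exp (-t) := by rw [hexpt]; ring
        _ ≤ Real.log 2 := te_le_log_two ht
        _ ≤ Real.log N := hlog2
  -- conclude
  have habs : |1 + β * (v i - sm N β v)| ≤ 1 + |β * (v i - sm N β v)| := by
    calc |1 + β * (v i - sm N β v)| ≤ |(1 : ℝ)| + |β * (v i - sm N β v)| := abs_add_le _ _
      _ = 1 + |β * (v i - sm N β v)| := by rw [abs_one]
  have h2 : w i ≤ 1 := by
    rw [div_le_one hZ]
    exact Finset.single_le_sum (fun k _ => (Real.exp_pos (β * v k)).le) (Finset.mem_univ i)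
  calc Real.exp (β * v i) / Z * |1 + β * (v i - sm N β v)|
      = w i * |1 + β * (v i - sm N β v)| := rfl
    _ ≤ w i * (1 + |β * (v i - sm N β v)|) :=
        mul_le_mul_of_nonneg_left habs (hwpos i).le
    _ = w i + w i * |β * (v i - sm N β v)| := by ring
    _ ≤ 1 + Real.log N := add_le_add h2 hkey

/-- the softmax operator is Lipschitz with constant `√N (1 + log N)`
with respect to the Euclidean norm. -/
theorem softmax_lipschitz
    (N : ℕ) (hN : 2 ≤ N) (β : ℝ) (hβ : 0 < β) (u u' : Fin N → ℝ) :
    |sm N β u - sm N β u'| ≤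
      Real.sqrt N * (1 + Real.log N) * Real.sqrt (∑ i, (u i - u' i) ^ 2) := by
  have hNe : (Finset.univ : Finset (Fin N)).Nonempty :=
    Finset.univ_nonempty_iff.mpr (Fin.pos_iff_nonempty.mp (by omega))
  set d : Fin N → ℝ := fun i => u i - u' i with hd
  set v : ℝ → Fin N → ℝ := fun t i => u' i + t * d i with hv
  set φ : ℝ → ℝ := fun t => sm N β (v t) with hφ
  set A : ℝ → ℝ := fun t => ∑ i, v t i * Real.exp (β * v t i) with hA
  set B : ℝ → ℝ := fun t => ∑ i, Real.exp (β * v t i) with hB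
  have hBpos : ∀ t, 0 < B t := fun t => Finset.sum_pos (fun j _ => Real.exp_pos _) hNe
  set f' : ℝ → ℝ := fun t => ∑ i,
    d i * (Real.exp (β * v t i) / B t * (1 + β * (v t i - sm N β (v t)))) with hf'
  -- derivative computation
  have hderiv : ∀ t, HasDerivAt φ (f' t) t := by
    intro t
    have hA' : HasDerivAt A
        (∑ i, (d i * Real.exp (β * v t i)
          + v t i * (Real.exp (β * v t i) * (β * d i)))) t := by
      refine HasDerivAt.fun_sum fun i _ => ?_
      have hl : HasDerivAt (fun s : ℝ => u' i + s * d i) (d i) t := by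
        simpa using ((hasDerivAt_id t).mul_const (d i)).const_add (u' i)
      have he : HasDerivAt (fun s : ℝ => Real.exp (β * (u' i + s * d i)))
          (Real.exp (β * v t i) * (β * d i)) t := by
        have := ((hl.const_mul β).exp)
        simpa [hv, mul_comm] using this
      simpa [hv] using hl.fun_mul he
    have hB' : HasDerivAt B (∑ i, Real.exp (β * v t i) * (β * d i)) t := by
      refine HasDerivAt.fun_sum fun i _ => ?_
      have hl : HasDerivAt (fun s : ℝ => u' i + s * d i) (d i) t := by
        simpa using ((hasDerivAt_id t).mul_const (d i)).const_add (u' i)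
      have := ((hl.const_mul β).exp)
      simpa [hv, mul_comm] using this
    have hq := hA'.fun_div hB' (ne_of_gt (hBpos t))
    have hφq : φ = fun s => A s / B s := rfl
    rw [hφq]
    refine hq.congr_deriv (Eq.symm ?_)
    -- algebra: f' t = (A' B - A B')/B²
    have hB0 : B t ≠ 0 := ne_of_gt (hBpos t)
    rw [hf', eq_div_iff (by positivity)]
    have hsm : sm N β (v t) = A t / B t := rfl
    simp only [hsm]
    rw [Finset.sum_mul, Finset.sum_mul, Finset.mul_sum, ← Finset.sum_sub_distrib]
    refine Finset.sum_congr rfl fun i _ => ?_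
    field_simp
    ring
  -- bound on the derivative
  have hbound : ∀ t, |f' t| ≤ (1 + Real.log N) * ∑ i, |d i| := by
    intro t
    calc |f' t| ≤ ∑ i, |d i * (Real.exp (β * v t i) / B t * (1 + β * (v t i - sm N β (v t))))| :=
          Finset.abs_sum_le_sum_abs _ _
      _ ≤ ∑ i, |d i| * (1 + Real.log N) := by
          refine Finset.sum_le_sum fun i _ => ?_
          rw [abs_mul, abs_mul, abs_div, abs_of_nonneg (Real.exp_nonneg _),
            abs_of_nonneg (hBpos t).le]
          refine mul_le_mul_of_nonneg_left ?_ (abs_nonneg _)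
          exact grad_bound hN hβ (v t) i
      _ = (1 + Real.log N) * ∑ i, |d i| := by rw [← Finset.sum_mul]; ring
  -- mean value inequality on [0,1]
  have hmvt := norm_image_sub_le_of_norm_deriv_le_segment'
    (f := φ) (f' := f') (a := 0) (b := 1) (C := (1 + Real.log N) * ∑ i, |d i|)
    (fun x _ => (hderiv x).hasDerivWithinAt)
    (fun x _ => by rw [Real.norm_eq_abs]; exact hbound x)
    1 (by norm_num)
  have hφ1 : φ 1 = sm N β u := by
    show sm N β (v 1) = sm N β u
    congr 1; funext i; simp [hv, hd]
  have hφ0 : φ 0 = sm N β u' := by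
    show sm N β (v 0) = sm N β u'
    congr 1; funext i; simp [hv]
  rw [hφ1, hφ0, Real.norm_eq_abs] at hmvt
  -- Cauchy-Schwarz
  have hcs : ∑ i, |d i| ≤ Real.sqrt N * Real.sqrt (∑ i, (u i - u' i) ^ 2) := by
    have h := Real.sum_mul_le_sqrt_mul_sqrt Finset.univ (fun _ => (1 : ℝ)) (fun i => |d i|)
    simp only [one_mul, one_pow, sq_abs] at h
    calc ∑ i, |d i| ≤ Real.sqrt (∑ _i : Fin N, (1:ℝ)) * Real.sqrt (∑ i, d i ^ 2) := h
      _ = Real.sqrt N * Real.sqrt (∑ i, (u i - u' i) ^ 2) := by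
          rw [Finset.sum_const, Finset.card_univ, Fintype.card_fin]
          simp [hd]
  have hlogN : (0:ℝ) ≤ Real.log N := by
    refine Real.log_nonneg ?_
    exact_mod_cast Nat.one_le_of_lt hN
  calc |sm N β u - sm N β u'| ≤ (1 + Real.log N) * (∑ i, |d i|) * (1 - 0) := hmvt
    _ = (1 + Real.log N) * ∑ i, |d i| := by ring
    _ ≤ (1 + Real.log N) * (Real.sqrt N * Real.sqrt (∑ i, (u i - u' i) ^ 2)) :=
        mul_le_mul_of_nonneg_left hcs (by linarith)
    _ = Real.sqrt N * (1 + Real.log N) * Real.sqrt (∑ i, (u i - u' i) ^ 2) := by ring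
end

section
/- For every β > 0, N ≥ 2, and u ∈ ℝ^N, the operator norm of the Hessian matrix of the softmax operator satisfies ‖∇²sm^β(u)‖_op ≤ 6β + 4β·log N. -/
open Real Finset
noncomputable section
namespace SHA
variable {N : ℕ}

abbrev pr (i : Fin N) : EuclideanSpace ℝ (Fin N) →L[ℝ] ℝ := EuclideanSpace.proj i

def Zf (β : ℝ) (v : EuclideanSpace ℝ (Fin N)) : ℝ := ∑ j, exp (β * v j)
def Sf (β : ℝ) (v : EuclideanSpace ℝ (Fin N)) : ℝ := ∑ j, v j * exp (β * v j)
def ff (β : ℝ) (v : EuclideanSpace ℝ (Fin N)) : ℝ := Sf β v / Zf β v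
def wf (β : ℝ) (i : Fin N) (v : EuclideanSpace ℝ (Fin N)) : ℝ := exp (β * v i) / Zf β v
def gf (β : ℝ) (i : Fin N) (v : EuclideanSpace ℝ (Fin N)) : ℝ :=
  wf β i v * (1 + β * (v i - ff β v))
def Gf (β : ℝ) (v : EuclideanSpace ℝ (Fin N)) : EuclideanSpace ℝ (Fin N) →L[ℝ] ℝ :=
  ∑ i, gf β i v • pr i
def Hm (β : ℝ) (u : EuclideanSpace ℝ (Fin N)) (i k : Fin N) : ℝ :=
  β * wf β i u * ((if i = k then 2 + β * (u i - ff β u) else 0)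
    - wf β k u * (2 + β * (u i - ff β u) + β * (u k - ff β u)))
def Bf (β : ℝ) (u : EuclideanSpace ℝ (Fin N)) :
    EuclideanSpace ℝ (Fin N) →L[ℝ] (EuclideanSpace ℝ (Fin N) →L[ℝ] ℝ) :=
  ∑ i, (∑ k, Hm β u i k • pr k).smulRight (pr i)

lemma Zf_pos (β : ℝ) (hN : 0 < N) (v : EuclideanSpace ℝ (Fin N)) : 0 < Zf β v := by
  have : Nonempty (Fin N) := ⟨⟨0, hN⟩⟩
  exact Finset.sum_pos (fun j _ => exp_pos _) univ_nonempty

lemma clm_ext_basis {f g : EuclideanSpace ℝ (Fin N) →L[ℝ] ℝ}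
    (h : ∀ k, f (EuclideanSpace.single k 1) = g (EuclideanSpace.single k 1)) : f = g := by
  apply ContinuousLinearMap.coe_injective
  refine Module.Basis.ext (EuclideanSpace.basisFun (Fin N) ℝ).toBasis fun k => ?_
  simpa [EuclideanSpace.basisFun_apply] using h k

lemma hasFDerivAt_coord (i : Fin N) (v : EuclideanSpace ℝ (Fin N)) :
    HasFDerivAt (fun v : EuclideanSpace ℝ (Fin N) => v i) (pr i) v :=
  (pr i).hasFDerivAt

lemma hasFDerivAt_exp_coord (β : ℝ) (i : Fin N) (v : EuclideanSpace ℝ (Fin N)) :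
    HasFDerivAt (fun v : EuclideanSpace ℝ (Fin N) => exp (β * v i))
      ((β * exp (β * v i)) • pr i) v := by
  have h := ((hasFDerivAt_coord i v).const_mul β).exp
  refine h.congr_fderiv (Eq.symm ?_)
  ext x
  simp [mul_comm, mul_assoc, mul_left_comm]

lemma hasFDerivAt_Zf (β : ℝ) (v : EuclideanSpace ℝ (Fin N)) :
    HasFDerivAt (Zf β) (∑ j, (β * exp (β * v j)) • pr j) v :=
  HasFDerivAt.fun_sum fun j _ => hasFDerivAt_exp_coord β j v

lemma hasFDerivAt_Sf (β : ℝ) (v : EuclideanSpace ℝ (Fin N)) :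
    HasFDerivAt (Sf β) (∑ j, ((1 + β * v j) * exp (β * v j)) • pr j) v := by
  refine HasFDerivAt.fun_sum fun j _ => ?_
  have h := (hasFDerivAt_coord j v).mul (hasFDerivAt_exp_coord β j v)
  refine h.congr_fderiv (Eq.symm ?_)
  ext x
  simp
  ring

lemma hasFDerivAt_inv_Zf (β : ℝ) (hN : 0 < N) (v : EuclideanSpace ℝ (Fin N)) :
    HasFDerivAt (fun v : EuclideanSpace ℝ (Fin N) => (Zf β v)⁻¹)
      ((-(Zf β v ^ 2)⁻¹) • ∑ j, (β * exp (β * v j)) • pr j) v :=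
  (hasDerivAt_inv (Zf_pos β hN v).ne').comp_hasFDerivAt v (hasFDerivAt_Zf β v)

lemma hasFDerivAt_ff (β : ℝ) (hN : 0 < N) (v : EuclideanSpace ℝ (Fin N)) :
    HasFDerivAt (ff β) (Gf β v) v := by
  have hZ := (Zf_pos β hN v).ne'
  have h := (hasFDerivAt_Sf β v).mul (hasFDerivAt_inv_Zf β hN v)
  have hfun : ff β = fun v : EuclideanSpace ℝ (Fin N) => Sf β v * (Zf β v)⁻¹ := by
    funext v; rw [ff, div_eq_mul_inv]
  rw [hfun]
  refine h.congr_fderiv (Eq.symm ?_)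
  apply clm_ext_basis
  intro m
  simp only [Gf, ContinuousLinearMap.sum_apply, ContinuousLinearMap.smul_apply,
    ContinuousLinearMap.add_apply, PiLp.proj_apply, EuclideanSpace.single_apply,
    smul_eq_mul, mul_ite, mul_one, mul_zero, Finset.sum_ite_eq, Finset.sum_ite_eq',
    Finset.mem_univ, if_true]
  simp only [gf, wf, ff]
  field_simp
  ring

lemma hasFDerivAt_wf (β : ℝ) (hN : 0 < N) (i : Fin N) (v : EuclideanSpace ℝ (Fin N)) :
    HasFDerivAt (wf β i)
      ((β * wf β i v) • pr i - wf β i v • ∑ k, (β * wf β k v) • pr k) v := by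
  have hZ := (Zf_pos β hN v).ne'
  have h := (hasFDerivAt_exp_coord β i v).mul (hasFDerivAt_inv_Zf β hN v)
  have hfun : wf β i = fun v : EuclideanSpace ℝ (Fin N) => exp (β * v i) * (Zf β v)⁻¹ := by
    funext v; rw [wf, div_eq_mul_inv]
  rw [hfun]
  refine h.congr_fderiv (Eq.symm ?_)
  apply clm_ext_basis
  intro m
  simp only [ContinuousLinearMap.sum_apply, ContinuousLinearMap.smul_apply,
    ContinuousLinearMap.add_apply, ContinuousLinearMap.sub_apply, PiLp.proj_apply,
    EuclideanSpace.single_apply, smul_eq_mul, mul_ite, mul_one, mul_zero,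
    Finset.sum_ite_eq, Finset.sum_ite_eq', Finset.mem_univ, if_true]
  simp only [wf]
  by_cases him : i = m
  · subst him; simp; field_simp; ring
  · simp [him]; field_simp

lemma hasFDerivAt_gf (β : ℝ) (hN : 0 < N) (i : Fin N) (v : EuclideanSpace ℝ (Fin N)) :
    HasFDerivAt (gf β i) (∑ k, Hm β v i k • pr k) v := by
  have h2 : HasFDerivAt (fun v : EuclideanSpace ℝ (Fin N) => 1 + β * (v i - ff β v))
      (β • (pr i - Gf β v)) v := by
    have := (((hasFDerivAt_coord i v).sub (hasFDerivAt_ff β hN v)).const_mul β).const_add 1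
    exact this
  have h := (hasFDerivAt_wf β hN i v).mul h2
  have hfun : gf β i = fun v : EuclideanSpace ℝ (Fin N) =>
      wf β i v * (1 + β * (v i - ff β v)) := rfl
  rw [hfun]
  refine h.congr_fderiv (Eq.symm ?_)
  apply clm_ext_basis
  intro m
  simp only [ContinuousLinearMap.sum_apply, ContinuousLinearMap.smul_apply,
    ContinuousLinearMap.add_apply, ContinuousLinearMap.sub_apply, PiLp.proj_apply,
    EuclideanSpace.single_apply, smul_eq_mul, mul_ite, mul_one, mul_zero,
    Finset.sum_ite_eq, Finset.sum_ite_eq', Finset.mem_univ, if_true, Hm, Gf, gf]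
  by_cases him : i = m <;> simp [him] <;> ring

lemma hasFDerivAt_Gf (β : ℝ) (hN : 0 < N) (u : EuclideanSpace ℝ (Fin N)) :
    HasFDerivAt (Gf β) (Bf β u) u := by
  have : Gf β = fun v : EuclideanSpace ℝ (Fin N) => ∑ i, gf β i v • pr i := rfl
  rw [this, Bf]
  exact HasFDerivAt.fun_sum fun i _ => (hasFDerivAt_gf β hN i u).smul_const (pr i)

lemma fderiv_fderiv_eq (β : ℝ) (hN : 0 < N) (u : EuclideanSpace ℝ (Fin N)) :
    fderiv ℝ (fderiv ℝ (fun v : EuclideanSpace ℝ (Fin N) => sm N β (fun i => v i))) u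
      = Bf β u := by
  have h1 : (fun v : EuclideanSpace ℝ (Fin N) => sm N β (fun i => v i)) = ff β := rfl
  have h2 : fderiv ℝ (ff β) = Gf β := funext fun v => (hasFDerivAt_ff β hN v).fderiv
  rw [h1, h2]
  exact (hasFDerivAt_Gf β hN u).fderiv

section Bound

variable (β : ℝ) (u : EuclideanSpace ℝ (Fin N))

def Hent : ℝ := ∑ j, wf β j u * (-log (wf β j u))

lemma wf_pos (hN : 0 < N) (i : Fin N) : 0 < wf β i u :=
  div_pos (exp_pos _) (Zf_pos β hN u)

lemma sum_wf (hN : 0 < N) : ∑ i, wf β i u = 1 := by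
  simp only [wf]
  rw [← Finset.sum_div]
  exact div_self (Zf_pos β hN u).ne'

lemma wf_le_one (hN : 0 < N) (i : Fin N) : wf β i u ≤ 1 := by
  rw [← sum_wf β u hN]
  exact Finset.single_le_sum (fun j _ => (wf_pos β u hN j).le) (mem_univ i)

lemma log_wf (hN : 0 < N) (i : Fin N) :
    log (wf β i u) = β * u i - log (Zf β u) := by
  rw [wf, log_div (exp_ne_zero _) (Zf_pos β hN u).ne', log_exp]

lemma sum_u_wf (hN : 0 < N) : ∑ j, u j * wf β j u = ff β u := by
  simp only [wf, ff, Sf]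
  rw [Finset.sum_div]
  exact Finset.sum_congr rfl fun j _ => (mul_div_assoc _ _ _).symm

lemma L_eq (hN : 0 < N) (i : Fin N) :
    β * (u i - ff β u) = log (wf β i u) + Hent β u := by
  have h1 : Hent β u = (∑ j, wf β j u) * log (Zf β u) - β * ∑ j, u j * wf β j u := by
    rw [Hent, Finset.sum_mul, Finset.mul_sum, ← Finset.sum_sub_distrib]
    exact Finset.sum_congr rfl fun j _ => by rw [log_wf β u hN]; ring
  rw [h1, sum_wf β u hN, sum_u_wf β u hN, log_wf β u hN]
  ring

lemma Hent_nonneg (hN : 0 < N) : 0 ≤ Hent β u := by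
  refine Finset.sum_nonneg fun j _ => mul_nonneg (wf_pos β u hN j).le ?_
  rw [neg_nonneg]
  exact log_nonpos (wf_pos β u hN j).le (wf_le_one β u hN j)

lemma Hent_le_log (hN : 0 < N) : Hent β u ≤ log N := by
  have hNR : (0:ℝ) < N := by exact_mod_cast hN
  have key : ∀ j : Fin N, wf β j u * (-log (wf β j u)) ≤ 1/N - wf β j u + wf β j u * log N := by
    intro j
    have hw := wf_pos β u hN j
    have h1 : -log (wf β j u) = log ((wf β j u)⁻¹ / N) + log N := by
      rw [log_div (by positivity) hNR.ne', log_inv]; ring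
    have h2 : log ((wf β j u)⁻¹ / N) ≤ (wf β j u)⁻¹ / N - 1 :=
      log_le_sub_one_of_pos (by positivity)
    calc wf β j u * (-log (wf β j u))
        = wf β j u * log ((wf β j u)⁻¹ / N) + wf β j u * log N := by rw [h1]; ring
      _ ≤ wf β j u * ((wf β j u)⁻¹ / N - 1) + wf β j u * log N := by
          have := mul_le_mul_of_nonneg_left h2 hw.le
          linarith
      _ = 1/N - wf β j u + wf β j u * log N := by
          field_simp
  calc Hent β u ≤ ∑ j : Fin N, (1/N - wf β j u + wf β j u * log N) :=
        Finset.sum_le_sum fun j _ => key j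
    _ = (N : ℝ) * (1/N) - (∑ j, wf β j u) + (∑ j, wf β j u) * log N := by
        rw [Finset.sum_add_distrib, Finset.sum_sub_distrib, Finset.sum_const,
          Finset.card_univ, Fintype.card_fin, ← Finset.sum_mul]
        simp [nsmul_eq_mul]
    _ = log N := by
        rw [sum_wf β u hN]
        field_simp
        ring

lemma wf_neg_log_le_one (hN : 0 < N) (i : Fin N) : wf β i u * (-log (wf β i u)) ≤ 1 := by
  have hw := wf_pos β u hN i
  have h2 : log ((wf β i u)⁻¹) ≤ (wf β i u)⁻¹ - 1 := log_le_sub_one_of_pos (by positivity)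
  have h3 : -log (wf β i u) = log ((wf β i u)⁻¹) := by rw [log_inv]
  rw [h3]
  calc wf β i u * log ((wf β i u)⁻¹) ≤ wf β i u * ((wf β i u)⁻¹ - 1) :=
        mul_le_mul_of_nonneg_left h2 hw.le
    _ = 1 - wf β i u := by field_simp
    _ ≤ 1 := by linarith [hw]

lemma wf_abs_L_le (hN : 0 < N) (i : Fin N) :
    wf β i u * |β * (u i - ff β u)| ≤ 1 + log N := by
  have hw := wf_pos β u hN i
  have h1 : |β * (u i - ff β u)| ≤ -log (wf β i u) + Hent β u := by
    rw [L_eq β u hN i]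
    calc |log (wf β i u) + Hent β u| ≤ |log (wf β i u)| + |Hent β u| := abs_add_le _ _
      _ = -log (wf β i u) + Hent β u := by
          rw [abs_of_nonpos (log_nonpos hw.le (wf_le_one β u hN i)),
            abs_of_nonneg (Hent_nonneg β u hN)]
  calc wf β i u * |β * (u i - ff β u)| ≤ wf β i u * (-log (wf β i u) + Hent β u) :=
        mul_le_mul_of_nonneg_left h1 hw.le
    _ = wf β i u * (-log (wf β i u)) + wf β i u * Hent β u := by ring
    _ ≤ 1 + log N := by
        have e1 := wf_neg_log_le_one β u hN i
        have e2 : wf β i u * Hent β u ≤ log N := by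
          calc wf β i u * Hent β u ≤ 1 * Hent β u :=
              mul_le_mul_of_nonneg_right (wf_le_one β u hN i) (Hent_nonneg β u hN)
            _ = Hent β u := one_mul _
            _ ≤ log N := Hent_le_log β u hN
        linarith

lemma sum_wf_abs_L_le (hN : 0 < N) :
    ∑ k, wf β k u * |β * (u k - ff β u)| ≤ 2 * log N := by
  have key : ∀ k : Fin N, wf β k u * |β * (u k - ff β u)| ≤
      wf β k u * (-log (wf β k u)) + wf β k u * Hent β u := by
    intro k
    have hw := wf_pos β u hN k
    have h1 : |β * (u k - ff β u)| ≤ -log (wf β k u) + Hent β u := by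
      rw [L_eq β u hN k]
      calc |log (wf β k u) + Hent β u| ≤ |log (wf β k u)| + |Hent β u| := abs_add_le _ _
        _ = -log (wf β k u) + Hent β u := by
            rw [abs_of_nonpos (log_nonpos hw.le (wf_le_one β u hN k)),
              abs_of_nonneg (Hent_nonneg β u hN)]
    calc wf β k u * |β * (u k - ff β u)| ≤ wf β k u * (-log (wf β k u) + Hent β u) :=
          mul_le_mul_of_nonneg_left h1 hw.le
      _ = wf β k u * (-log (wf β k u)) + wf β k u * Hent β u := by ring
  calc ∑ k, wf β k u * |β * (u k - ff β u)|
      ≤ ∑ k, (wf β k u * (-log (wf β k u)) + wf β k u * Hent β u) :=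
        Finset.sum_le_sum fun k _ => key k
    _ = Hent β u + (∑ k, wf β k u) * Hent β u := by
        rw [Finset.sum_add_distrib, ← Hent, ← Finset.sum_mul]
    _ = Hent β u + Hent β u := by rw [sum_wf β u hN, one_mul]
    _ ≤ 2 * log N := by linarith [Hent_le_log β u hN]

lemma row_sum_le (hβ : 0 ≤ β) (hN : 0 < N) (i : Fin N) :
    ∑ k, |Hm β u i k| ≤ β * (6 + 4 * log N) := by
  have hw := wf_pos β u hN i
  set L : Fin N → ℝ := fun k => β * (u k - ff β u) with hL
  have habs : ∀ k, |Hm β u i k| ≤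
      β * wf β i u * ((if i = k then 2 + |L i| else 0) + wf β k u * (2 + |L i| + |L k|)) := by
    intro k
    have hwk := wf_pos β u hN k
    rw [Hm]
    rw [abs_mul, abs_of_nonneg (mul_nonneg hβ hw.le)]
    refine mul_le_mul_of_nonneg_left ?_ (mul_nonneg hβ hw.le)
    calc |(if i = k then 2 + L i else 0) - wf β k u * (2 + L i + L k)|
        ≤ |if i = k then 2 + L i else 0| + |wf β k u * (2 + L i + L k)| := abs_sub _ _
      _ ≤ (if i = k then 2 + |L i| else 0) + wf β k u * (2 + |L i| + |L k|) := by
          gcongr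
          · by_cases hik : i = k
            · simp only [hik, if_true]
              calc |2 + L k| ≤ |2| + |L k| := abs_add_le _ _
                _ = 2 + |L k| := by norm_num
            · simp [hik]
          · rw [abs_mul, abs_of_nonneg hwk.le]
            refine mul_le_mul_of_nonneg_left ?_ hwk.le
            calc |2 + L i + L k| ≤ |2 + L i| + |L k| := abs_add_le _ _
              _ ≤ |2| + |L i| + |L k| := by linarith [abs_add_le (2:ℝ) (L i)]
              _ = 2 + |L i| + |L k| := by norm_num
  calc ∑ k, |Hm β u i k| ≤ ∑ k, β * wf β i u *
        ((if i = k then 2 + |L i| else 0) + wf β k u * (2 + |L i| + |L k|)) :=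
        Finset.sum_le_sum fun k _ => habs k
    _ = β * wf β i u * ((2 + |L i|) +
        ((2 + |L i|) * ∑ k, wf β k u + ∑ k, wf β k u * |L k|)) := by
        rw [← Finset.mul_sum, Finset.sum_add_distrib, Finset.sum_ite_eq, if_pos (mem_univ i)]
        congr 2
        rw [Finset.mul_sum, ← Finset.sum_add_distrib]
        exact Finset.sum_congr rfl fun k _ => by ring
    _ = β * (wf β i u * (2 + |L i|) + wf β i u * (2 + |L i|) +
        wf β i u * ∑ k, wf β k u * |L k|) := by
        rw [sum_wf β u hN]; ring
    _ ≤ β * ((2 + (1 + log N)) + (2 + (1 + log N)) + 2 * log N) := by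
        have h1 : wf β i u * (2 + |L i|) ≤ 2 + (1 + log N) := by
          have := wf_abs_L_le β u hN i
          have h2 := wf_le_one β u hN i
          nlinarith [abs_nonneg (L i), hw.le]
        have h3 : wf β i u * ∑ k, wf β k u * |L k| ≤ 2 * log N := by
          have hs : 0 ≤ ∑ k, wf β k u * |L k| :=
            Finset.sum_nonneg fun k _ => mul_nonneg (wf_pos β u hN k).le (abs_nonneg _)
          calc wf β i u * ∑ k, wf β k u * |L k| ≤ 1 * ∑ k, wf β k u * |L k| :=
                mul_le_mul_of_nonneg_right (wf_le_one β u hN i) hs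
            _ = ∑ k, wf β k u * |L k| := one_mul _
            _ ≤ 2 * log N := sum_wf_abs_L_le β u hN
        have := mul_le_mul_of_nonneg_left (by linarith : wf β i u * (2 + |L i|) +
          wf β i u * (2 + |L i|) + wf β i u * ∑ k, wf β k u * |L k| ≤
          (2 + (1 + log N)) + (2 + (1 + log N)) + 2 * log N) hβ
        linarith
    _ = β * (6 + 4 * log N) := by ring

lemma Hm_symm (i k : Fin N) : Hm β u i k = Hm β u k i := by
  by_cases hik : i = k
  · rw [hik]
  · rw [Hm, Hm, if_neg hik, if_neg (Ne.symm hik)]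
    ring

lemma col_sum_le (hβ : 0 ≤ β) (hN : 0 < N) (k : Fin N) :
    ∑ i, |Hm β u i k| ≤ β * (6 + 4 * log N) := by
  calc ∑ i, |Hm β u i k| = ∑ i, |Hm β u k i| := by
        exact Finset.sum_congr rfl fun i _ => by rw [Hm_symm]
    _ ≤ β * (6 + 4 * log N) := row_sum_le β u hβ hN k

lemma Bf_apply (h x : EuclideanSpace ℝ (Fin N)) :
    Bf β u h x = ∑ i, (∑ k, Hm β u i k * h k) * x i := by
  simp [Bf, ContinuousLinearMap.sum_apply, ContinuousLinearMap.smulRight_apply,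
    ContinuousLinearMap.smul_apply, PiLp.proj_apply, smul_eq_mul]

lemma norm_sq_eq (x : EuclideanSpace ℝ (Fin N)) : ∑ i, |x i| ^ 2 = ‖x‖ ^ 2 := by
  rw [EuclideanSpace.norm_eq, Real.sq_sqrt (Finset.sum_nonneg fun i _ => sq_nonneg _)]
  exact Finset.sum_congr rfl fun i _ => by rw [Real.norm_eq_abs]

lemma norm_Bf_le (hβ : 0 ≤ β) (hN : 0 < N) : ‖Bf β u‖ ≤ β * (6 + 4 * log N) := by
  have hlog : 0 ≤ log N := log_nonneg (by exact_mod_cast hN)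
  have hR : 0 ≤ β * (6 + 4 * log N) := mul_nonneg hβ (by linarith)
  set R := β * (6 + 4 * log N) with hRdef
  refine ContinuousLinearMap.opNorm_le_bound _ hR fun h => ?_
  refine ContinuousLinearMap.opNorm_le_bound _ (mul_nonneg hR (norm_nonneg h)) fun x => ?_
  rw [Bf_apply]
  set T : ℝ := ∑ p ∈ (univ ×ˢ univ : Finset (Fin N × Fin N)),
    |Hm β u p.1 p.2| * |h p.2| * |x p.1| with hT
  have hTnn : 0 ≤ T := Finset.sum_nonneg fun p _ => by positivity
  have step1 : |∑ i, (∑ k, Hm β u i k * h k) * x i| ≤ T := by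
    rw [hT, Finset.sum_product]
    calc |∑ i, (∑ k, Hm β u i k * h k) * x i|
        ≤ ∑ i, |(∑ k, Hm β u i k * h k) * x i| := Finset.abs_sum_le_sum_abs _ _
      _ ≤ ∑ i, ∑ k, |Hm β u i k| * |h k| * |x i| := by
          refine Finset.sum_le_sum fun i _ => ?_
          rw [abs_mul, ← Finset.sum_mul]
          refine mul_le_mul_of_nonneg_right ?_ (abs_nonneg _)
          calc |∑ k, Hm β u i k * h k| ≤ ∑ k, |Hm β u i k * h k| :=
                Finset.abs_sum_le_sum_abs _ _
            _ = ∑ k, |Hm β u i k| * |h k| :=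
                Finset.sum_congr rfl fun k _ => abs_mul _ _
  have cs : T ^ 2 ≤ (R * ‖x‖ ^ 2) * (R * ‖h‖ ^ 2) := by
    have hcs := Finset.sum_sq_le_sum_mul_sum_of_sq_eq_mul
      (univ ×ˢ univ : Finset (Fin N × Fin N))
      (f := fun p => |Hm β u p.1 p.2| * |x p.1| ^ 2)
      (g := fun p => |Hm β u p.1 p.2| * |h p.2| ^ 2)
      (r := fun p => |Hm β u p.1 p.2| * |h p.2| * |x p.1|)
      (fun p _ => by positivity) (fun p _ => by positivity)
      (fun p _ => by ring)
    refine hcs.trans ?_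
    have hf : ∑ p ∈ (univ ×ˢ univ : Finset (Fin N × Fin N)),
        |Hm β u p.1 p.2| * |x p.1| ^ 2 ≤ R * ‖x‖ ^ 2 := by
      rw [Finset.sum_product]
      calc ∑ i, ∑ k, |Hm β u i k| * |x i| ^ 2
          = ∑ i, |x i| ^ 2 * ∑ k, |Hm β u i k| := by
            refine Finset.sum_congr rfl fun i _ => ?_
            rw [← Finset.sum_mul]
            exact mul_comm _ _
        _ ≤ ∑ i, |x i| ^ 2 * R :=
            Finset.sum_le_sum fun i _ =>
              mul_le_mul_of_nonneg_left (row_sum_le β u hβ hN i) (sq_nonneg _)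
        _ = R * ‖x‖ ^ 2 := by rw [← Finset.sum_mul, norm_sq_eq, mul_comm]
    have hg : ∑ p ∈ (univ ×ˢ univ : Finset (Fin N × Fin N)),
        |Hm β u p.1 p.2| * |h p.2| ^ 2 ≤ R * ‖h‖ ^ 2 := by
      rw [Finset.sum_product]
      rw [Finset.sum_comm]
      calc ∑ k, ∑ i, |Hm β u i k| * |h k| ^ 2
          = ∑ k, |h k| ^ 2 * ∑ i, |Hm β u i k| := by
            refine Finset.sum_congr rfl fun k _ => ?_
            rw [← Finset.sum_mul]
            exact mul_comm _ _
        _ ≤ ∑ k, |h k| ^ 2 * R :=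
            Finset.sum_le_sum fun k _ =>
              mul_le_mul_of_nonneg_left (col_sum_le β u hβ hN k) (sq_nonneg _)
        _ = R * ‖h‖ ^ 2 := by rw [← Finset.sum_mul, norm_sq_eq, mul_comm]
    have h1 : 0 ≤ ∑ p ∈ (univ ×ˢ univ : Finset (Fin N × Fin N)),
        |Hm β u p.1 p.2| * |h p.2| ^ 2 := Finset.sum_nonneg fun p _ => by positivity
    have h2 : 0 ≤ R * ‖x‖ ^ 2 := by positivity
    exact mul_le_mul hf hg h1 h2
  have final : T ≤ R * ‖h‖ * ‖x‖ := by
    nlinarith [hTnn, norm_nonneg h, norm_nonneg x, hR,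
      mul_nonneg (mul_nonneg hR (norm_nonneg h)) (norm_nonneg x)]
  exact step1.trans final

end Bound

end SHA

end

/-- the operator norm of the Hessian of the softmax operator (as a function on
Euclidean space `ℝ^N`) is bounded by `6β + 4β log N`. -/
theorem softmax_hessian_op_norm_bound
    (N : ℕ) (hN : 2 ≤ N) (β : ℝ) (hβ : 0 < β) (u : EuclideanSpace ℝ (Fin N)) :
    ‖fderiv ℝ (fderiv ℝ (fun v : EuclideanSpace ℝ (Fin N) => sm N β (fun i => v i))) u‖ ≤
      6 * β + 4 * β * Real.log N := by
  have hN0 : 0 < N := by omega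
  rw [SHA.fderiv_fderiv_eq β hN0 u]
  exact (SHA.norm_Bf_le β u hβ.le hN0).trans_eq (by ring)
end

section
/- For every N ≥ 2, every fixed u ∈ ℝ^N, and every index k ∈ {1,...,N}, the k-th partial derivative of the softmax operator converges as β → ∞ to 𝔰_k(u) := 1{k ∈ argmax(u)} / |argmax(u)|, where argmax(u) := {i : u_i = max_j u_j}; that is, ∂_k sm^β(u) → 𝔰_k(u) as β → ∞. -/
open Filter Real


/-- The `k`-th partial derivative of the softmax operator,
`∂_k sm^β(u) = w_k^β(u)·[1 + β(u_k − sm^β(u))]`. -/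
noncomputable def smPartial (N : ℕ) (β : ℝ) (u : Fin N → ℝ) (k : Fin N) : ℝ :=
  smw N β u k * (1 + β * (u k - sm N β u))

open scoped Classical in
/-- The set of maximizing indices `argmax(u) = {i : u_i = max_j u_j}`. -/
noncomputable def argmaxSet (N : ℕ) (u : Fin N → ℝ) : Finset (Fin N) :=
  Finset.univ.filter fun i => ∀ j, u j ≤ u i

open scoped Classical in
/-- `𝔰_k(u) = 1{k ∈ argmax(u)} / |argmax(u)|`. -/
noncomputable def frakS (N : ℕ) (u : Fin N → ℝ) (k : Fin N) : ℝ :=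
  (if k ∈ argmaxSet N u then 1 else 0) / (argmaxSet N u).card

lemma aux_lin (a c : ℝ) (hc : c < 0) :
    Tendsto (fun β : ℝ => (1 + β * a) * Real.exp (β * c)) atTop (nhds 0) := by
  have h1 : Tendsto (fun β : ℝ => Real.exp (β * c)) atTop (nhds 0) := by
    apply Real.tendsto_exp_atBot.comp
    exact tendsto_id.atTop_mul_const_of_neg hc
  have h2 : Tendsto (fun β : ℝ => β * Real.exp (β * c)) atTop (nhds 0) := by
    have h3 := (Real.tendsto_pow_mul_exp_neg_atTop_nhds_zero 1).comp
      (Filter.Tendsto.atTop_mul_const (by linarith : 0 < -c) (tendsto_id (α := ℝ)))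
    have h4 := h3.const_mul (-c)⁻¹
    simp only [Function.comp, pow_one, mul_zero] at h4
    convert h4 using 2 with β
    rw [mul_neg, neg_neg]
    field_simp [hc.ne]
    simp only [id]; ring_nf
  have := h1.add (h2.const_mul a)
  simp only [mul_zero, add_zero] at this
  convert this using 2 with β
  ring

/-- for fixed `u ∈ ℝ^N` and each index `k`, the `k`-th partial derivative of the
softmax operator converges to `𝔰_k(u)` as `β → ∞`. -/
theorem softmax_partial_tendsto
    (N : ℕ) (hN : 2 ≤ N) (u : Fin N → ℝ) (k : Fin N) :
    Filter.Tendsto (fun β : ℝ => smPartial N β u k) Filter.atTop (nhds (frakS N u k)) := by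
  classical
  have hne : (Finset.univ : Finset (Fin N)).Nonempty :=
    ⟨⟨0, by omega⟩, Finset.mem_univ _⟩
  obtain ⟨m, -, hm⟩ := Finset.exists_max_image Finset.univ u hne
  set M := u m with hMdef
  have hmem : ∀ j : Fin N, j ∈ argmaxSet N u ↔ u j = M := by
    intro j
    simp only [argmaxSet, Finset.mem_filter, Finset.mem_univ, true_and]
    constructor
    · intro h; exact le_antisymm (hm j (Finset.mem_univ j)) (h m)
    · intro h j'; rw [h]; exact hm j' (Finset.mem_univ j')
  have hmmem : m ∈ argmaxSet N u := (hmem m).2 rfl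
  have hcard : 0 < (argmaxSet N u).card := Finset.card_pos.2 ⟨m, hmmem⟩
  set A : ℝ := ((argmaxSet N u).card : ℝ) with hA
  have hApos : 0 < A := by rw [hA]; exact_mod_cast hcard
  have hAsum : A = ∑ j : Fin N, (if u j = M then (1:ℝ) else 0) := by
    have hfil : (Finset.univ.filter fun j => u j = M) = argmaxSet N u := by
      rw [argmaxSet]
      apply Finset.filter_congr
      intro x _
      have h := hmem x
      simp only [argmaxSet, Finset.mem_filter, Finset.mem_univ, true_and] at h
      exact h.symm
    rw [Finset.sum_boole, hfil]
  set D : ℝ → ℝ := fun β => ∑ j, Real.exp (β * (u j - M)) with hD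
  set Num : ℝ → ℝ := fun β =>
    ∑ i, (1 + β * (u k - u i)) * Real.exp (β * (u k + u i - 2 * M)) with hNum
  -- limit of D
  have hDlim : Tendsto D atTop (nhds A) := by
    rw [hAsum]
    apply tendsto_finset_sum
    intro j _
    by_cases hj : u j = M
    · simp only [hj, sub_self, mul_zero, Real.exp_zero, if_pos]
      exact tendsto_const_nhds
    · rw [if_neg hj]
      have hlt : u j - M < 0 := by
        have := hm j (Finset.mem_univ j); rcases lt_or_eq_of_le this with h | h
        · linarith
        · exact absurd h hj
      have := aux_lin 0 (u j - M) hlt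
      simpa using this
  -- limit of Num
  have hNumlim : Tendsto Num atTop (nhds (if k ∈ argmaxSet N u then A else 0)) := by
    by_cases hk : u k = M
    · rw [if_pos ((hmem k).2 hk)]
      rw [hAsum]
      apply tendsto_finset_sum
      intro i _
      by_cases hi : u i = M
      · simp only [hi, hk, if_pos]
        have : ∀ β : ℝ, (1 + β * (M - M)) * Real.exp (β * (M + M - 2 * M)) = 1 := by
          intro β; simp [sub_self]; ring_nf; simp
        simp only [this]
        exact tendsto_const_nhds
      · rw [if_neg hi]
        have hlt : u k + u i - 2 * M < 0 := by
          have h1 := hm i (Finset.mem_univ i)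
          rcases lt_or_eq_of_le h1 with h | h
          · rw [hk]; linarith
          · exact absurd h hi
        exact aux_lin (u k - u i) _ hlt
    · rw [if_neg (fun h => hk ((hmem k).1 h))]
      have : (0:ℝ) = ∑ _i : Fin N, (0:ℝ) := by simp
      rw [this]
      apply tendsto_finset_sum
      intro i _
      have hlt : u k + u i - 2 * M < 0 := by
        have h1 := hm i (Finset.mem_univ i)
        have h2 := hm k (Finset.mem_univ k)
        rcases lt_or_eq_of_le h2 with h | h
        · linarith
        · exact absurd h hk
      exact aux_lin (u k - u i) _ hlt
  -- identity smPartial = Num / D^2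
  have hSpos : ∀ β : ℝ, 0 < ∑ j, Real.exp (β * u j) := fun β =>
    Finset.sum_pos (fun j _ => Real.exp_pos _) hne
  have hiden : ∀ β : ℝ, smPartial N β u k = Num β / (D β) ^ 2 := by
    intro β
    have hS := (hSpos β).ne'
    have hE : Real.exp (β * M) ≠ 0 := (Real.exp_pos _).ne'
    have hDeq : D β = (∑ j, Real.exp (β * u j)) / Real.exp (β * M) := by
      simp only [hD]
      rw [Finset.sum_div]
      apply Finset.sum_congr rfl
      intro j _
      rw [mul_sub, Real.exp_sub]
    have hNumeq : Num β = (∑ i, (1 + β * (u k - u i)) * Real.exp (β * u i))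
        * Real.exp (β * u k) / (Real.exp (β * M)) ^ 2 := by
      simp only [hNum]
      rw [Finset.sum_mul, Finset.sum_div]
      apply Finset.sum_congr rfl
      intro i _
      rw [show β * (u k + u i - 2 * M) = (β * u i + β * u k) - (β * M + β * M) by ring,
        Real.exp_sub, Real.exp_add, Real.exp_add, sq]
      ring
    have hsum : (∑ i, (1 + β * (u k - u i)) * Real.exp (β * u i))
        = (∑ j, Real.exp (β * u j)) + β * u k * (∑ j, Real.exp (β * u j))
          - β * (∑ i, u i * Real.exp (β * u i)) := by
      rw [Finset.mul_sum, Finset.mul_sum, ← Finset.sum_add_distrib, ← Finset.sum_sub_distrib]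
      congr 1; funext i
      ring
    rw [smPartial, smw, sm, hDeq, hNumeq, hsum, div_pow,
      div_div_div_cancel_right₀ (pow_ne_zero 2 hE)]
    set S := ∑ j, Real.exp (β * u j) with hSdef
    set T := ∑ i, u i * Real.exp (β * u i) with hTdef
    rw [div_mul_eq_mul_div, div_eq_div_iff hS (pow_ne_zero 2 hS)]
    have key : (1 + β * (u k - T / S)) * S = S + β * (u k * S - T) := by
      rw [add_mul, one_mul, mul_assoc, sub_mul, div_mul_cancel₀ _ hS]
    linear_combination (Real.exp (β * u k) * S) * key
  simp only [hiden]
  have hlim := hNumlim.div (hDlim.pow 2) (pow_ne_zero 2 hApos.ne')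
  convert hlim using 2
  · rfl
  unfold frakS
  by_cases hk : k ∈ argmaxSet N u
  · rw [if_pos hk, if_pos hk, ← hA, sq]
    rw [div_mul_eq_div_div]
    congr 1
    exact (div_self hApos.ne').symm
  · rw [if_neg hk, if_neg hk, zero_div, zero_div]
end

section
/- Let β ≥ 0 and let U = (U_1, ..., U_N) be real random variables (N ≥ 2) such that all relevant expectations are finite. Defining the random sub-optimality gaps Δ_i := max_{1≤j≤N} U_j − U_i, one has E[max_{1≤i≤N} U_i − sm^β(U)] ≤ ∑_{i=1}^N E[Δ_i · exp(−β·Δ_i)]. -/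
open MeasureTheory

lemma softmax_pointwise (N : ℕ) (hN : 2 ≤ N) (β : ℝ) (u : Fin N → ℝ) :
    (⨆ i, u i) - sm N β u ≤ ∑ i, ((⨆ j, u j) - u i) * Real.exp (-β * ((⨆ j, u j) - u i)) := by
  have hNe : Nonempty (Fin N) := ⟨⟨0, by omega⟩⟩
  set M := ⨆ j, u j with hM
  have hle : ∀ i, u i ≤ M := fun i => le_ciSup (Set.Finite.bddAbove (Set.finite_range u)) i
  obtain ⟨i0, hi0⟩ := exists_eq_ciSup_of_finite (f := u)
  have hS : (0:ℝ) < ∑ j, Real.exp (β * u j) :=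
    Finset.sum_pos (fun j _ => Real.exp_pos _) ⟨i0, Finset.mem_univ i0⟩
  have hnum : (0:ℝ) ≤ ∑ i, (M - u i) * Real.exp (β * u i) :=
    Finset.sum_nonneg fun i _ => mul_nonneg (sub_nonneg.2 (hle i)) (Real.exp_pos _).le
  have hSge : Real.exp (β * M) ≤ ∑ j, Real.exp (β * u j) := by
    calc Real.exp (β * M) = Real.exp (β * u i0) := by rw [hi0]
    _ ≤ _ := Finset.single_le_sum (f := fun j => Real.exp (β * u j)) (fun j _ => (Real.exp_pos _).le) (Finset.mem_univ i0)
  have key : M - sm N β u = (∑ i, (M - u i) * Real.exp (β * u i)) / ∑ j, Real.exp (β * u j) := by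
    rw [sm, eq_div_iff hS.ne', sub_mul, div_mul_cancel₀ _ hS.ne']
    simp [sub_mul, Finset.sum_sub_distrib, Finset.mul_sum]
  rw [key]
  calc (∑ i, (M - u i) * Real.exp (β * u i)) / ∑ j, Real.exp (β * u j)
      ≤ (∑ i, (M - u i) * Real.exp (β * u i)) / Real.exp (β * M) :=
        div_le_div_of_nonneg_left hnum (Real.exp_pos _) hSge
    _ = ∑ i, (M - u i) * Real.exp (-β * (M - u i)) := by
        rw [Finset.sum_div]
        exact Finset.sum_congr rfl fun i _ => by
          rw [mul_div_assoc, ← Real.exp_sub]; ring_nf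

/-- for random variables `U_1, …, U_N` with the relevant expectations finite and
sub-optimality gaps `Δ_i := max_j U_j − U_i`, one has
`E[max_i U_i − sm^β(U)] ≤ ∑_i E[Δ_i exp(−β Δ_i)]`. -/
theorem softmax_bias_bound
    {Ω : Type*} [MeasurableSpace Ω] (μ : Measure Ω) [IsProbabilityMeasure μ]
    (N : ℕ) (hN : 2 ≤ N) (β : ℝ) (hβ : 0 ≤ β) (U : Fin N → Ω → ℝ)
    (hInt : Integrable (fun ω => (⨆ i, U i ω) - sm N β (fun i => U i ω)) μ)
    (hIntΔ : ∀ i, Integrable (fun ω =>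
      ((⨆ j, U j ω) - U i ω) * Real.exp (-β * ((⨆ j, U j ω) - U i ω))) μ) :
    ∫ ω, ((⨆ i, U i ω) - sm N β (fun i => U i ω)) ∂μ ≤
      ∑ i, ∫ ω, ((⨆ j, U j ω) - U i ω) * Real.exp (-β * ((⨆ j, U j ω) - U i ω)) ∂μ := by
  rw [← integral_finset_sum _ (fun i _ => hIntΔ i)]
  exact integral_mono hInt (integrable_finset_sum _ (fun i _ => hIntΔ i))
    (fun ω => softmax_pointwise N hN β (fun i => U i ω))
end

section
/- Let U be a nonnegative real random variable and suppose there exist constants c, H, δ > 0 such that the restriction of the law of U to the interval (0, c) admits a Lebesgue density f_U satisfying f_U(u) ≤ H·u^{δ−1} for all u ∈ (0, c). Then there exist constants C > 0 and β* > 0, depending only on c, H, and δ, such that for all β ≥ β*, E[U·exp(−β·U)] ≤ C·(1/β)^{1+δ}. -/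
open MeasureTheory

lemma aux_tail_bound (c β x : ℝ) (hc : 0 < c) (hβc : 1/c ≤ β) (hx : c ≤ x) :
    x * Real.exp (-β * x) ≤ c * Real.exp (-β * c) := by
  have hβ0 : 0 < β := lt_of_lt_of_le (by positivity) hβc
  have h1 : (x - c)/c ≤ β * (x - c) := by
    rw [div_eq_mul_inv, mul_comm]
    have : c⁻¹ ≤ β := by rwa [one_div] at hβc
    exact mul_le_mul this le_rfl (by linarith) hβ0.le
  have h2 : x ≤ c * Real.exp (β * (x - c)) := by
    have h := (Real.add_one_le_exp ((x - c)/c)).trans (Real.exp_le_exp.2 h1)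
    have hx' : c * ((x - c)/c + 1) = x := by field_simp; ring
    calc x = c * ((x - c)/c + 1) := hx'.symm
      _ ≤ c * Real.exp (β * (x - c)) := mul_le_mul_of_nonneg_left h hc.le
  calc x * Real.exp (-β * x) ≤ c * Real.exp (β * (x - c)) * Real.exp (-β * x) :=
        mul_le_mul_of_nonneg_right h2 (Real.exp_pos _).le
    _ = c * Real.exp (-β * c) := by
        rw [mul_assoc, ← Real.exp_add]
        congr 1
        ring

/-- if a nonnegative random variable `U` has law whose restriction to `(0, c)`
admits a Lebesgue density `f` with `f(u) ≤ H u^(δ−1)`, then there are constants `C, β* > 0`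
depending only on `c, H, δ` such that `E[U exp(−β U)] ≤ C (1/β)^(1+δ)` for all `β ≥ β*`. -/
theorem margin_exp_moment_bound
    (c H δ : ℝ) (hc : 0 < c) (hH : 0 < H) (hδ : 0 < δ) :
    ∃ C > (0:ℝ), ∃ βstar > (0:ℝ),
      ∀ (Ω : Type) [MeasurableSpace Ω] (μ : Measure Ω), IsProbabilityMeasure μ →
        ∀ (U : Ω → ℝ), Measurable U → (∀ ω, 0 ≤ U ω) →
          ∀ (f : ℝ → ENNReal),
            (μ.map U).restrict (Set.Ioo 0 c) = (volume.restrict (Set.Ioo 0 c)).withDensity f →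
            (∀ u ∈ Set.Ioo (0:ℝ) c, f u ≤ ENNReal.ofReal (H * u ^ (δ - 1))) →
            ∀ β : ℝ, βstar ≤ β →
              ∫ ω, U ω * Real.exp (-β * U ω) ∂μ ≤ C * (1 / β) ^ (1 + δ) := by
  set n : ℕ := ⌈1 + δ⌉₊ with hn
  have hΓ : 0 < Real.Gamma (1 + δ) := Real.Gamma_pos_of_pos (by linarith)
  have hcpow : (0:ℝ) < c ^ (1 + δ) := Real.rpow_pos_of_pos hc _
  have hfac : (0:ℝ) < (Nat.factorial n : ℝ) := by positivity
  refine ⟨H * Real.Gamma (1 + δ) + c * (Nat.factorial n : ℝ) / c ^ (1 + δ), by positivity,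
    max (1/c) 1, lt_max_of_lt_right one_pos, ?_⟩
  intro Ω _ μ hμ U hU hU0 f hf hfb β hβ
  have hβ1 : 1 ≤ β := le_trans (le_max_right _ _) hβ
  have hβc : 1/c ≤ β := le_trans (le_max_left _ _) hβ
  have hβ0 : 0 < β := lt_of_lt_of_le one_pos hβ1
  have hβpow : (0:ℝ) < (1/β) ^ (1 + δ) := Real.rpow_pos_of_pos (by positivity) _
  have hν : IsProbabilityMeasure (μ.map U) := Measure.isProbabilityMeasure_map hU.aemeasurable
  have hg : Measurable fun x : ℝ => ENNReal.ofReal (x * Real.exp (-β * x)) :=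
    (measurable_id.mul (Real.measurable_exp.comp (measurable_id.const_mul (-β)))).ennreal_ofReal
  have hnonneg : 0 ≤ᵐ[μ] fun ω => U ω * Real.exp (-β * U ω) :=
    Filter.Eventually.of_forall fun ω => mul_nonneg (hU0 ω) (Real.exp_pos _).le
  have hmeas : AEStronglyMeasurable (fun ω => U ω * Real.exp (-β * U ω)) μ :=
    (hU.mul (Real.measurable_exp.comp (hU.const_mul (-β)))).aestronglyMeasurable
  rw [integral_eq_lintegral_of_nonneg_ae hnonneg hmeas]
  refine ENNReal.toReal_le_of_le_ofReal (by positivity) ?_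
  -- Part 1: the integral over (0, c)
  have part1 : ∫⁻ x in Set.Ioo 0 c, ENNReal.ofReal (x * Real.exp (-β * x)) ∂(μ.map U)
      ≤ ENNReal.ofReal (H * Real.Gamma (1 + δ) * (1/β) ^ (1 + δ)) := by
    set gH : ℝ → ENNReal := fun u => ENNReal.ofReal (H * u ^ (δ - 1)) with hgHdef
    have hgH : Measurable gH := by fun_prop
    have hle : (μ.map U).restrict (Set.Ioo 0 c)
        ≤ (volume.restrict (Set.Ioo 0 c)).withDensity gH := by
      rw [hf]
      refine Measure.le_iff.2 fun s hs => ?_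
      rw [withDensity_apply _ hs, withDensity_apply _ hs]
      refine lintegral_mono_ae (ae_restrict_of_ae ?_)
      exact (ae_restrict_iff' measurableSet_Ioo).2
        (Filter.Eventually.of_forall fun x hx => hfb x hx)
    have hi1 : IntegrableOn (fun x => x ^ δ * Real.exp (-β * x)) (Set.Ioi 0) := by
      have := integrableOn_rpow_mul_exp_neg_mul_rpow (s := δ) (p := 1) (b := β)
        (by linarith) one_pos hβ0
      simpa [Real.rpow_one] using this
    have hval : ∫ x in Set.Ioi 0, x ^ δ * Real.exp (-β * x)
        = (1/β) ^ (1 + δ) * Real.Gamma (1 + δ) := by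
      have h := Real.integral_rpow_mul_exp_neg_mul_Ioi (a := 1 + δ) (r := β)
        (by linarith) hβ0
      simp only [add_sub_cancel_left, neg_mul] at h ⊢
      exact h
    calc ∫⁻ x in Set.Ioo 0 c, ENNReal.ofReal (x * Real.exp (-β * x)) ∂(μ.map U)
        ≤ ∫⁻ x, ENNReal.ofReal (x * Real.exp (-β * x))
            ∂((volume.restrict (Set.Ioo 0 c)).withDensity gH) :=
          lintegral_mono' hle le_rfl
      _ = ∫⁻ x in Set.Ioo 0 c, gH x * ENNReal.ofReal (x * Real.exp (-β * x)) ∂volume :=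
          lintegral_withDensity_eq_lintegral_mul_non_measurable _ hgH
            (Filter.Eventually.of_forall fun x => ENNReal.ofReal_lt_top) _
      _ ≤ ∫⁻ x in Set.Ioi 0, gH x * ENNReal.ofReal (x * Real.exp (-β * x)) ∂volume :=
          lintegral_mono_set Set.Ioo_subset_Ioi_self
      _ = ∫⁻ x in Set.Ioi 0, ENNReal.ofReal (H * (x ^ δ * Real.exp (-β * x))) ∂volume := by
          refine setLIntegral_congr_fun measurableSet_Ioi
            (fun x hx => ?_)
          have hx0 : (0:ℝ) < x := hx
          have hxpow : x ^ (δ - 1) * x = x ^ δ := by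
            rw [Real.rpow_sub hx0, Real.rpow_one, div_mul_cancel₀]
            exact ne_of_gt hx0
          rw [hgHdef]
          rw [← ENNReal.ofReal_mul (by positivity)]
          congr 1
          rw [show H * x ^ (δ - 1) * (x * Real.exp (-β * x))
              = H * (x ^ (δ - 1) * x * Real.exp (-β * x)) from by ring, hxpow]
      _ = ENNReal.ofReal (∫ x in Set.Ioi 0, H * (x ^ δ * Real.exp (-β * x))) :=
          (ofReal_integral_eq_lintegral_ofReal (hi1.const_mul H)
            ((ae_restrict_iff' measurableSet_Ioi).2
              (Filter.Eventually.of_forall fun x hx => by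
                have hx0 : (0:ℝ) < x := hx
                positivity))).symm
      _ = ENNReal.ofReal (H * Real.Gamma (1 + δ) * (1/β) ^ (1 + δ)) := by
          rw [MeasureTheory.integral_const_mul, hval]
          congr 1
          ring
  -- Part 2: the integral over the complement of (0, c)
  have part2 : ∫⁻ x in (Set.Ioo 0 c)ᶜ, ENNReal.ofReal (x * Real.exp (-β * x)) ∂(μ.map U)
      ≤ ENNReal.ofReal (c * (Nat.factorial n : ℝ) / c ^ (1 + δ) * (1/β) ^ (1 + δ)) := by
    have hae0 : ∀ᵐ x ∂(μ.map U), 0 ≤ x :=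
      (ae_map_iff hU.aemeasurable measurableSet_Ici).2 (Filter.Eventually.of_forall hU0)
    have hbd : ∀ᵐ x ∂((μ.map U).restrict (Set.Ioo 0 c)ᶜ),
        ENNReal.ofReal (x * Real.exp (-β * x)) ≤ ENNReal.ofReal (c * Real.exp (-β * c)) := by
      filter_upwards [ae_restrict_of_ae hae0,
        self_mem_ae_restrict measurableSet_Ioo.compl] with x hx0 hxs
      rcases eq_or_lt_of_le hx0 with h0 | hpos
      · simp [← h0]
      · have hxc : c ≤ x := by
          by_contra hlt
          push_neg at hlt
          exact hxs ⟨hpos, hlt⟩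
        exact ENNReal.ofReal_le_ofReal (aux_tail_bound c β x hc hβc hxc)
    have key : c * Real.exp (-β * c) ≤ c * (Nat.factorial n : ℝ) / c ^ (1 + δ) * (1/β) ^ (1 + δ) := by
      have hbc : (0:ℝ) < β * c := by positivity
      have h1c : 1 ≤ β * c := by
        have := (div_le_iff₀ hc).1 hβc
        linarith
      have hpow : (0:ℝ) < (β * c) ^ (1 + δ) := Real.rpow_pos_of_pos hbc _
      have h2 : (β * c) ^ (1 + δ) ≤ (β * c) ^ (n : ℝ) :=
        Real.rpow_le_rpow_of_exponent_le h1c (Nat.le_ceil _)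
      have h3 : (β * c) ^ (n : ℝ) = (β * c) ^ n := Real.rpow_natCast _ n
      have h4 : (β * c) ^ n ≤ (Nat.factorial n : ℝ) * Real.exp (β * c) := by
        have h := Real.pow_div_factorial_le_exp (x := β * c) hbc.le n
        rw [div_le_iff₀ (by positivity : (0:ℝ) < (Nat.factorial n : ℝ))] at h
        linarith [h]
      have h5 : (β * c) ^ (1 + δ) * Real.exp (-(β * c)) ≤ (Nat.factorial n : ℝ) := by
        calc (β * c) ^ (1 + δ) * Real.exp (-(β * c))
            ≤ ((Nat.factorial n : ℝ) * Real.exp (β * c)) * Real.exp (-(β * c)) := by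
              refine mul_le_mul_of_nonneg_right ?_ (Real.exp_pos _).le
              calc (β * c) ^ (1 + δ) ≤ (β * c) ^ (n : ℝ) := h2
                _ = (β * c) ^ n := h3
                _ ≤ (Nat.factorial n : ℝ) * Real.exp (β * c) := h4
          _ = (Nat.factorial n : ℝ) := by
              rw [mul_assoc, ← Real.exp_add, add_neg_cancel, Real.exp_zero, mul_one]
      have hrw : c * (Nat.factorial n : ℝ) / c ^ (1 + δ) * (1/β) ^ (1 + δ)
          = c * (Nat.factorial n : ℝ) / (β * c) ^ (1 + δ) := by
        rw [Real.mul_rpow hβ0.le hc.le, Real.div_rpow zero_le_one hβ0.le, Real.one_rpow]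
        field_simp
      rw [hrw, le_div_iff₀ hpow]
      calc c * Real.exp (-β * c) * (β * c) ^ (1 + δ)
          = c * ((β * c) ^ (1 + δ) * Real.exp (-(β * c))) := by rw [neg_mul]; ring
        _ ≤ c * (Nat.factorial n : ℝ) := mul_le_mul_of_nonneg_left h5 hc.le
    calc ∫⁻ x in (Set.Ioo 0 c)ᶜ, ENNReal.ofReal (x * Real.exp (-β * x)) ∂(μ.map U)
        ≤ ∫⁻ _ in (Set.Ioo 0 c)ᶜ, ENNReal.ofReal (c * Real.exp (-β * c)) ∂(μ.map U) :=
          lintegral_mono_ae hbd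
      _ = ENNReal.ofReal (c * Real.exp (-β * c)) * (μ.map U) (Set.Ioo 0 c)ᶜ :=
          setLIntegral_const _ _
      _ ≤ ENNReal.ofReal (c * Real.exp (-β * c)) * 1 := mul_le_mul_right prob_le_one _
      _ = ENNReal.ofReal (c * Real.exp (-β * c)) := mul_one _
      _ ≤ ENNReal.ofReal (c * (Nat.factorial n : ℝ) / c ^ (1 + δ) * (1/β) ^ (1 + δ)) :=
          ENNReal.ofReal_le_ofReal key
  calc ∫⁻ ω, ENNReal.ofReal (U ω * Real.exp (-β * U ω)) ∂μ
      = ∫⁻ x, ENNReal.ofReal (x * Real.exp (-β * x)) ∂(μ.map U) :=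
        (lintegral_map hg hU).symm
    _ = (∫⁻ x in Set.Ioo 0 c, ENNReal.ofReal (x * Real.exp (-β * x)) ∂(μ.map U))
        + ∫⁻ x in (Set.Ioo 0 c)ᶜ, ENNReal.ofReal (x * Real.exp (-β * x)) ∂(μ.map U) :=
        (lintegral_add_compl _ measurableSet_Ioo).symm
    _ ≤ ENNReal.ofReal (H * Real.Gamma (1 + δ) * (1/β) ^ (1 + δ))
        + ENNReal.ofReal (c * (Nat.factorial n : ℝ) / c ^ (1 + δ) * (1/β) ^ (1 + δ)) :=
        add_le_add part1 part2
    _ = ENNReal.ofReal ((H * Real.Gamma (1 + δ) + c * (Nat.factorial n : ℝ) / c ^ (1 + δ))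
        * (1/β) ^ (1 + δ)) := by
        rw [← ENNReal.ofReal_add (by positivity) (by positivity)]
        congr 1
        ring
end

section
/- For every β > 0, N ≥ 2, and u ∈ ℝ^N, one has ∑_{ℓ=1}^N w_ℓ^β(u)·β·|u_ℓ − sm^β(u)| ≤ 2·H(u; β) ≤ 2·log N, where H(u; β) := −∑_{j=1}^N w_j^β(u)·log w_j^β(u). -/
/-- The entropy `H(u; β) = −∑ j, w_j^β(u) log w_j^β(u)` of the softmax weights. -/
noncomputable def smEntropy (N : ℕ) (β : ℝ) (u : Fin N → ℝ) : ℝ :=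
  -∑ j, smw N β u j * Real.log (smw N β u j)

/-- `∑ ℓ, w_ℓ^β(u) β |u_ℓ − sm^β(u)| ≤ 2 H(u; β) ≤ 2 log N`. -/
theorem softmax_weighted_gap_le_entropy
    (N : ℕ) (hN : 2 ≤ N) (β : ℝ) (hβ : 0 < β) (u : Fin N → ℝ) :
    (∑ ℓ, smw N β u ℓ * (β * |u ℓ - sm N β u|)) ≤ 2 * smEntropy N β u ∧
    2 * smEntropy N β u ≤ 2 * Real.log N := by
  have hNpos : 0 < N := by omega
  haveI : Nonempty (Fin N) := ⟨⟨0, hNpos⟩⟩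
  set Z : ℝ := ∑ j, Real.exp (β * u j) with hZ
  have hZpos : 0 < Z := Finset.sum_pos (fun j _ => Real.exp_pos _) Finset.univ_nonempty
  set w : Fin N → ℝ := smw N β u with hw
  have hwpos : ∀ ℓ, 0 < w ℓ := fun ℓ => div_pos (Real.exp_pos _) hZpos
  have hwsum : ∑ ℓ, w ℓ = 1 := by
    simp only [hw, smw, ← Finset.sum_div]
    exact div_self (ne_of_gt hZpos)
  have hwle : ∀ ℓ, w ℓ ≤ 1 := by
    intro ℓ
    rw [hw, smw, div_le_one hZpos, hZ]
    exact Finset.single_le_sum (f := fun j => Real.exp (β * u j)) (fun j _ => (Real.exp_pos _).le) (Finset.mem_univ ℓ)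
  have hlogw : ∀ ℓ, Real.log (w ℓ) = β * u ℓ - Real.log Z := by
    intro ℓ
    rw [hw, smw, Real.log_div (Real.exp_ne_zero _) (ne_of_gt hZpos), Real.log_exp]
  set H : ℝ := smEntropy N β u with hH
  have hHnn : 0 ≤ H := by
    rw [hH, smEntropy, neg_nonneg]
    apply Finset.sum_nonpos
    intro j _
    exact mul_nonpos_of_nonneg_of_nonpos (hwpos j).le
      (Real.log_nonpos (hwpos j).le (hwle j))
  have hsm : sm N β u = ∑ i, w i * u i := by
    rw [sm, Finset.sum_div]
    congr 1; ext i
    rw [hw, smw]; ring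
  -- key identity: β * (u ℓ - sm) = log (w ℓ) + H
  have hkey : ∀ ℓ, β * (u ℓ - sm N β u) = Real.log (w ℓ) + H := by
    intro ℓ
    have hβsm : β * sm N β u = -H + Real.log Z := by
      rw [hsm, Finset.mul_sum]
      have : ∀ i ∈ Finset.univ, β * (w i * u i)
          = w i * Real.log (w i) + w i * Real.log Z := by
        intro i _
        rw [hlogw i]; ring
      rw [Finset.sum_congr rfl this, Finset.sum_add_distrib, ← Finset.sum_mul, hwsum,
        hH, smEntropy]
      ring
    rw [mul_sub, hβsm, hlogw ℓ]; ring
  have hsumx : ∑ ℓ, w ℓ * (Real.log (w ℓ) + H) = 0 := by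
    have : ∀ ℓ ∈ Finset.univ, w ℓ * (Real.log (w ℓ) + H)
        = w ℓ * Real.log (w ℓ) + w ℓ * H := fun ℓ _ => by ring
    rw [Finset.sum_congr rfl this, Finset.sum_add_distrib, ← Finset.sum_mul, hwsum,
      hH, smEntropy]
    ring
  constructor
  · -- first inequality
    have habs : ∀ ℓ, β * |u ℓ - sm N β u|
        = 2 * max (Real.log (w ℓ) + H) 0 - (Real.log (w ℓ) + H) := by
      intro ℓ
      have h1 : β * |u ℓ - sm N β u| = |Real.log (w ℓ) + H| := by
        rw [← hkey ℓ, abs_mul, abs_of_pos hβ]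
      rw [h1, abs_eq_max_neg, two_mul]
      rcases le_total (Real.log (w ℓ) + H) 0 with h | h
      · rw [max_eq_right h, max_eq_right (by linarith)]; ring
      · rw [max_eq_left h, max_eq_left (by linarith)]; ring
    calc ∑ ℓ, w ℓ * (β * |u ℓ - sm N β u|)
        = 2 * ∑ ℓ, w ℓ * max (Real.log (w ℓ) + H) 0 := by
          rw [Finset.mul_sum]
          have : ∀ ℓ ∈ Finset.univ, w ℓ * (β * |u ℓ - sm N β u|)
              = 2 * (w ℓ * max (Real.log (w ℓ) + H) 0)
                - w ℓ * (Real.log (w ℓ) + H) := by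
            intro ℓ _; rw [habs ℓ]; ring
          rw [Finset.sum_congr rfl this, Finset.sum_sub_distrib, hsumx, sub_zero]
      _ ≤ 2 * ∑ ℓ, w ℓ * H := by
          gcongr with ℓ _
          · exact (hwpos ℓ).le
          · exact max_le (by linarith [Real.log_nonpos (hwpos ℓ).le (hwle ℓ)]) hHnn
      _ = 2 * H := by rw [← Finset.sum_mul, hwsum, one_mul]
  · -- entropy ≤ log N
    have hH' : H = ∑ ℓ, w ℓ * Real.log ((w ℓ)⁻¹) := by
      rw [hH, smEntropy, ← Finset.sum_neg_distrib]
      congr 1; ext ℓ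
      rw [Real.log_inv]; ring
    have hjensen := (strictConcaveOn_log_Ioi.concaveOn).le_map_sum
      (t := Finset.univ) (w := w) (p := fun ℓ => (w ℓ)⁻¹)
      (fun ℓ _ => (hwpos ℓ).le) hwsum
      (fun ℓ _ => Set.mem_Ioi.mpr (inv_pos.mpr (hwpos ℓ)))
    have hsum1 : ∑ ℓ, w ℓ • (w ℓ)⁻¹ = (N : ℝ) := by
      have : ∀ ℓ ∈ Finset.univ, w ℓ • (w ℓ)⁻¹ = (1 : ℝ) := fun ℓ _ => by
        rw [smul_eq_mul, mul_inv_cancel₀ (ne_of_gt (hwpos ℓ))]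
      rw [Finset.sum_congr rfl this, Finset.sum_const, Finset.card_univ, Fintype.card_fin,
        nsmul_eq_mul, mul_one]
    have : H ≤ Real.log N := by
      rw [hH']
      calc ∑ ℓ, w ℓ * Real.log ((w ℓ)⁻¹)
          = ∑ ℓ, w ℓ • Real.log ((w ℓ)⁻¹) := by simp [smul_eq_mul]
        _ ≤ Real.log (∑ ℓ, w ℓ • (w ℓ)⁻¹) := hjensen
        _ = Real.log N := by rw [hsum1]
    linarith
end

section
/- For every β > 0, N ≥ 2, u ∈ ℝ^N, and index k ∈ {1,...,N} such that u_k ≤ sm^β(u), one has w_k^β(u)·β·(sm^β(u) − u_k) ≤ 1/e. -/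
lemma aux_xexp (x : ℝ) : x * Real.exp (-x) ≤ Real.exp (-1) := by
  have h := Real.add_one_le_exp (x - 1)
  have hx : x ≤ Real.exp (x - 1) := by linarith
  calc x * Real.exp (-x) ≤ Real.exp (x - 1) * Real.exp (-x) :=
        mul_le_mul_of_nonneg_right hx (Real.exp_pos _).le
    _ = Real.exp (-1) := by rw [← Real.exp_add]; ring_nf

/-- if `u_k ≤ sm^β(u)` then `w_k^β(u) · β (sm^β(u) − u_k) ≤ 1/e`. -/
theorem softmax_weighted_neg_gap_le
    (N : ℕ) (hN : 2 ≤ N) (β : ℝ) (hβ : 0 < β) (u : Fin N → ℝ) (k : Fin N)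
    (hk : u k ≤ sm N β u) :
    smw N β u k * (β * (sm N β u - u k)) ≤ 1 / Real.exp 1 := by
  have hne : (Finset.univ : Finset (Fin N)).Nonempty := ⟨k, Finset.mem_univ k⟩
  have hSpos : 0 < ∑ j, Real.exp (β * u j) :=
    Finset.sum_pos (fun j _ => Real.exp_pos _) hne
  set S := ∑ j, Real.exp (β * u j) with hS
  have hgap : sm N β u - u k = (∑ i, (u i - u k) * Real.exp (β * u i)) / S := by
    rw [sm]
    rw [div_sub' hSpos.ne']
    congr 1
    rw [hS, Finset.sum_mul, ← Finset.sum_sub_distrib]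
    exact Finset.sum_congr rfl fun i _ => by ring
  have key : smw N β u k * (β * (sm N β u - u k))
      = (∑ i, β * (u i - u k) * Real.exp (β * u i) * Real.exp (β * u k)) / S ^ 2 := by
    rw [smw, hgap, ← hS]
    rw [show (∑ i, β * (u i - u k) * Real.exp (β * u i) * Real.exp (β * u k))
        = β * (∑ i, (u i - u k) * Real.exp (β * u i)) * Real.exp (β * u k) by
      rw [Finset.mul_sum, Finset.sum_mul]; exact Finset.sum_congr rfl fun i _ => by ring]
    field_simp
  have hterm : ∀ i : Fin N, β * (u i - u k) * Real.exp (β * u i) * Real.exp (β * u k)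
      ≤ Real.exp (-1) * (Real.exp (β * u i)) ^ 2 := by
    intro i
    have h := aux_xexp (β * (u i - u k))
    have hek : Real.exp (β * u k) = Real.exp (β * u i) * Real.exp (-(β * (u i - u k))) := by
      rw [← Real.exp_add]; ring_nf
    rw [hek]
    calc β * (u i - u k) * Real.exp (β * u i)
          * (Real.exp (β * u i) * Real.exp (-(β * (u i - u k))))
        = (β * (u i - u k) * Real.exp (-(β * (u i - u k)))) * (Real.exp (β * u i)) ^ 2 := by
          ring
      _ ≤ Real.exp (-1) * (Real.exp (β * u i)) ^ 2 :=
          mul_le_mul_of_nonneg_right h (sq_nonneg _)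
  have hsumsq : ∑ i, (Real.exp (β * u i)) ^ 2 ≤ S ^ 2 := by
    rw [hS, sq (∑ j, Real.exp (β * u j)), Finset.sum_mul]
    refine Finset.sum_le_sum fun i _ => ?_
    rw [sq]
    exact mul_le_mul_of_nonneg_left
      (Finset.single_le_sum (f := fun j => Real.exp (β * u j))
        (fun j _ => (Real.exp_pos (β * u j)).le) (Finset.mem_univ i))
      (Real.exp_pos _).le
  have hnum : (∑ i, β * (u i - u k) * Real.exp (β * u i) * Real.exp (β * u k))
      ≤ Real.exp (-1) * S ^ 2 := by
    calc (∑ i, β * (u i - u k) * Real.exp (β * u i) * Real.exp (β * u k))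
        ≤ ∑ i, Real.exp (-1) * (Real.exp (β * u i)) ^ 2 :=
          Finset.sum_le_sum fun i _ => hterm i
      _ = Real.exp (-1) * ∑ i, (Real.exp (β * u i)) ^ 2 := by rw [Finset.mul_sum]
      _ ≤ Real.exp (-1) * S ^ 2 :=
          mul_le_mul_of_nonneg_left hsumsq (Real.exp_pos _).le
  rw [key, div_le_iff₀ (by positivity)]
  calc (∑ i, β * (u i - u k) * Real.exp (β * u i) * Real.exp (β * u k))
      ≤ Real.exp (-1) * S ^ 2 := hnum
    _ = 1 / Real.exp 1 * S ^ 2 := by rw [Real.exp_neg, one_div]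
end

section
/- For every β > 0 and every u ∈ ℝ, the derivative of the softmax smoothing φ_β(u) := u·σ(βu) satisfies |φ_β′(u)| = |σ(βu) + βu·σ(βu)(1 − σ(βu))| ≤ 5/4. -/
/-- The sigmoid function `σ(x) = e^x / (1 + e^x)`. -/
noncomputable def sigmoid (x : ℝ) : ℝ := Real.exp x / (1 + Real.exp x)

/-- The softmax smoothing `φ_β(u) = u σ(βu)` of `u ↦ max{u, 0}`. -/
noncomputable def phiSm (β u : ℝ) : ℝ := u * sigmoid (β * u)

lemma cubic_le_exp {x : ℝ} (hx : 0 ≤ x) :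
    1 + x + x ^ 2 / 2 + x ^ 3 / 6 ≤ Real.exp x := by
  have h := Real.sum_le_exp_of_nonneg hx 4
  have : ∑ i ∈ Finset.range 4, x ^ i / (Nat.factorial i) =
      1 + x + x ^ 2 / 2 + x ^ 3 / 6 := by
    norm_num [Finset.sum_range_succ, Nat.factorial]
  linarith [this ▸ h]

lemma key_ineq {x : ℝ} (hx : 0 ≤ x) :
    4 * x * Real.exp x ≤ (1 + Real.exp x) ^ 2 := by
  set E := Real.exp x with hE
  have hc : 1 + x + x ^ 2 / 2 + x ^ 3 / 6 ≤ E := cubic_le_exp hx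
  nlinarith [sq_nonneg (E - (1 + x + x ^ 2 / 2 + x ^ 3 / 6)), sq_nonneg (x - 2),
    sq_nonneg x, sq_nonneg (x * (x - 2)), sq_nonneg (x ^ 2 - 2), mul_nonneg hx hx,
    mul_nonneg (mul_nonneg hx hx) hx, sq_nonneg (x ^ 2 - 2 * x), sq_nonneg (x ^ 3 - 2)]

lemma sigmoid_pos (x : ℝ) : 0 < sigmoid x := by
  unfold sigmoid
  positivity

lemma sigmoid_lt_one (x : ℝ) : sigmoid x < 1 := by
  unfold sigmoid
  rw [div_lt_one (by positivity)]
  linarith [Real.exp_pos x]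

/-- `|x σ(x)(1-σ(x))| ≤ 1/4`. -/
lemma abs_mul_sigmoid_le (x : ℝ) : |x * (sigmoid x * (1 - sigmoid x))| ≤ 1 / 4 := by
  have hEpos : (0:ℝ) < Real.exp x := Real.exp_pos x
  have hden : (0:ℝ) < 1 + Real.exp x := by positivity
  have hform : sigmoid x * (1 - sigmoid x) = Real.exp x / (1 + Real.exp x) ^ 2 := by
    unfold sigmoid
    field_simp
    ring
  rw [hform, abs_le]
  constructor
  · -- lower bound; nontrivial when x < 0
    rcases le_or_gt 0 x with hx | hx
    · have : 0 ≤ x * (Real.exp x / (1 + Real.exp x) ^ 2) := by positivity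
      linarith
    · have hy : 0 ≤ -x := by linarith
      have hkey := key_ineq hy
      -- 4 * (-x) * exp (-x) ≤ (1 + exp (-x))^2
      have hinv : Real.exp (-x) = (Real.exp x)⁻¹ := Real.exp_neg x
      rw [hinv] at hkey
      have hIE : (Real.exp x)⁻¹ * Real.exp x = 1 :=
        inv_mul_cancel₀ (ne_of_gt hEpos)
      have hmul := mul_le_mul_of_nonneg_right hkey (sq_nonneg (Real.exp x))
      have hkey2 : 4 * (-x) * Real.exp x ≤ (1 + Real.exp x) ^ 2 := by
        nlinarith [hmul, hIE, hEpos]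
      rw [neg_le, ← neg_mul, ← mul_div_assoc, div_le_iff₀ (by positivity)]
      linarith
  · rcases le_or_gt 0 x with hx | hx
    · have hkey := key_ineq hx
      rw [← mul_div_assoc, div_le_iff₀ (by positivity)]
      linarith
    · have : x * (Real.exp x / (1 + Real.exp x) ^ 2) ≤ 0 := by
        apply mul_nonpos_of_nonpos_of_nonneg hx.le
        positivity
      linarith

lemma sigmoid_hasDerivAt (x : ℝ) :
    HasDerivAt sigmoid (sigmoid x * (1 - sigmoid x)) x := by
  have h1 : HasDerivAt Real.exp (Real.exp x) x := Real.hasDerivAt_exp x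
  have h2 : HasDerivAt (fun y => 1 + Real.exp y) (Real.exp x) x := h1.const_add 1
  have hne : (1:ℝ) + Real.exp x ≠ 0 := by positivity
  have h3 := h1.div h2 hne
  refine h3.congr_deriv ?_
  unfold sigmoid
  field_simp

lemma phiSm_hasDerivAt (β u : ℝ) :
    HasDerivAt (phiSm β)
      (sigmoid (β * u) + β * u * sigmoid (β * u) * (1 - sigmoid (β * u))) u := by
  have hinner : HasDerivAt (fun y : ℝ => sigmoid (β * y))
      (sigmoid (β * u) * (1 - sigmoid (β * u)) * β) u := by
    have := (sigmoid_hasDerivAt (β * u)).comp u ((hasDerivAt_id u).const_mul β)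
    exact this.congr_deriv (by ring)
  have h := (hasDerivAt_id u).mul hinner
  refine h.congr_deriv ?_
  simp [phiSm]
  ring

/-- the derivative of `φ_β` satisfies
`φ_β′(u) = σ(βu) + βu σ(βu)(1 − σ(βu))` and `|φ_β′(u)| ≤ 5/4`. -/
theorem phiSm_deriv_bound (β : ℝ) (hβ : 0 < β) (u : ℝ) :
    deriv (phiSm β) u
      = sigmoid (β * u) + β * u * sigmoid (β * u) * (1 - sigmoid (β * u)) ∧
    |sigmoid (β * u) + β * u * sigmoid (β * u) * (1 - sigmoid (β * u))| ≤ 5 / 4 := by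
  constructor
  · exact (phiSm_hasDerivAt β u).deriv
  · have h1 := abs_mul_sigmoid_le (β * u)
    have h2 := sigmoid_pos (β * u)
    have h3 := sigmoid_lt_one (β * u)
    rw [abs_le] at h1 ⊢
    constructor <;> nlinarith [h1.1, h1.2]
end

section
/- Let Z = (X, A, Y) with A ∈ {1,...,N}, Y bounded, and propensity scores p*(a|x) := P(A = a | X = x) satisfying η ≤ p*(ℓ|x) ≤ 1 − η for all ℓ and x (strong positivity), with Q*(a,x) := E[Y | X = x, A = a] bounded. Fix β > 0 and define the score Ψ^β(z; Q, α) := sm^β(Q(1,x),...,Q(N,x)) + ∑_{ℓ=1}^N α_ℓ(a, x)·(y − Q(a, x)), and the true Riesz representers α_k^β(a, x) := ∂_k sm^β(Q*(1,x),...,Q*(N,x)) · 1{a = k}/p*(k|x), where ∂_k sm^β(u) = w_k^β(u)·[1 + β(u_k − sm^β(u))]. Then: (i) V^β := E[sm^β(Q*(1,X),...,Q*(N,X))] = E[Ψ^β(Z; Q*, α^β)]; and (ii) the score is Neyman orthogonal at (Q*, α^β): for every bounded ω ∈ L²(P_{(A,X)}) (one direction per nuisance coordinate), the Gateaux derivatives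 vanish, i.e. d/dt E[Ψ^β(Z; Q* + tω, α^β)]|_{t=0} = 0 and d/dt E[Ψ^β(Z; Q*, α^β + tω)]|_{t=0} = 0. -/
open MeasureTheory ProbabilityTheory

/-- The smoothed de-biased score
`Ψ^β(z; Q, α) = sm^β(Q(1,x),…,Q(N,x)) + ∑ ℓ, α_ℓ(a, x)(y − Q(a, x))` at `z = (x, a, y)`. -/
noncomputable def scoreSm {𝒳 : Type*} (N : ℕ) (β : ℝ)
    (Q : Fin N → 𝒳 → ℝ) (α : Fin N → Fin N × 𝒳 → ℝ) (z : 𝒳 × Fin N × ℝ) : ℝ :=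
  sm N β (fun ℓ => Q ℓ z.1) + ∑ ℓ, α ℓ (z.2.1, z.1) * (z.2.2 - Q z.2.1 z.1)

/-- The true Riesz representer `α_k^β(a, x) = ∂_k sm^β(Q*(·,x)) · 1{a = k} / p*(k|x)`. -/
noncomputable def alphaBeta {𝒳 : Type*} (N : ℕ) (β : ℝ)
    (Qstar pstar : Fin N → 𝒳 → ℝ) (k : Fin N) (w : Fin N × 𝒳) : ℝ :=
  smPartial N β (fun ℓ => Qstar ℓ w.2) k * (if w.1 = k then 1 else 0) / pstar k w.2

section Helpers

lemma sm_denom_pos (N : ℕ) (hN : 0 < N) (β : ℝ) (u : Fin N → ℝ) :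
    0 < ∑ j, Real.exp (β * u j) := by
  have : Nonempty (Fin N) := ⟨⟨0, hN⟩⟩
  exact Finset.sum_pos (fun j _ => Real.exp_pos _) Finset.univ_nonempty

lemma abs_sm_le (N : ℕ) (hN : 0 < N) (β : ℝ) (u : Fin N → ℝ) (M : ℝ)
    (hu : ∀ i, |u i| ≤ M) : |sm N β u| ≤ M := by
  have hS := sm_denom_pos N hN β u
  rw [sm, abs_div, abs_of_pos hS, div_le_iff₀ hS]
  calc |∑ i, u i * Real.exp (β * u i)| ≤ ∑ i, |u i * Real.exp (β * u i)| :=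
        Finset.abs_sum_le_sum_abs _ _
    _ ≤ ∑ i, M * Real.exp (β * u i) := Finset.sum_le_sum fun i _ => by
        rw [abs_mul, abs_of_pos (Real.exp_pos _)]
        exact mul_le_mul_of_nonneg_right (hu i) (Real.exp_pos _).le
    _ = M * ∑ i, Real.exp (β * u i) := by rw [Finset.mul_sum]

lemma smw_nonneg (N : ℕ) (β : ℝ) (u : Fin N → ℝ) (k : Fin N) : 0 ≤ smw N β u k :=
  div_nonneg (Real.exp_pos _).le (Finset.sum_nonneg fun _ _ => (Real.exp_pos _).le)

lemma smw_le_one (N : ℕ) (hN : 0 < N) (β : ℝ) (u : Fin N → ℝ) (k : Fin N) :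
    smw N β u k ≤ 1 := by
  rw [smw, div_le_one (sm_denom_pos N hN β u)]
  exact Finset.single_le_sum (f := fun j => Real.exp (β * u j))
    (fun j _ => (Real.exp_pos _).le) (Finset.mem_univ k)

lemma abs_smPartial_le (N : ℕ) (hN : 0 < N) (β : ℝ) (hβ : 0 ≤ β) (u : Fin N → ℝ) (M : ℝ)
    (hu : ∀ i, |u i| ≤ M) (k : Fin N) : |smPartial N β u k| ≤ 1 + 2 * β * M := by
  have h1 : |smw N β u k| ≤ 1 := by
    rw [abs_of_nonneg (smw_nonneg N β u k)]; exact smw_le_one N hN β u k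
  have h2 : |u k - sm N β u| ≤ 2 * M := by
    calc |u k - sm N β u| ≤ |u k| + |sm N β u| := abs_sub _ _
      _ ≤ M + M := add_le_add (hu k) (abs_sm_le N hN β u M hu)
      _ = 2 * M := by ring
  have h3 : |1 + β * (u k - sm N β u)| ≤ 1 + 2 * β * M := by
    calc |1 + β * (u k - sm N β u)| ≤ |(1:ℝ)| + |β * (u k - sm N β u)| := abs_add_le _ _
      _ = 1 + β * |u k - sm N β u| := by rw [abs_one, abs_mul, abs_of_nonneg hβ]
      _ ≤ 1 + β * (2 * M) := by nlinarith
      _ = 1 + 2 * β * M := by ring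
  rw [smPartial, abs_mul]
  nlinarith [abs_nonneg (1 + β * (u k - sm N β u)), abs_nonneg (smw N β u k)]

lemma hasDerivAt_sm (N : ℕ) (hN : 0 < N) (β : ℝ) (u v : Fin N → ℝ) (t : ℝ) :
    HasDerivAt (fun s => sm N β (fun i => u i + s * v i))
      (∑ k, smPartial N β (fun i => u i + t * v i) k * v k) t := by
  set w : Fin N → ℝ := fun i => u i + t * v i with hw
  set S : ℝ := ∑ i, Real.exp (β * w i) with hSdefS
  set G : ℝ := ∑ i, w i * Real.exp (β * w i) with hGdef
  have hS : 0 < S := sm_denom_pos N hN β w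
  have hlin : ∀ i, HasDerivAt (fun s => u i + s * v i) (v i) t := fun i =>
    (hasDerivAt_mul_const (v i)).const_add (u i)
  have hexp : ∀ i, HasDerivAt (fun s => Real.exp (β * (u i + s * v i)))
      (Real.exp (β * w i) * (β * v i)) t := fun i => ((hlin i).const_mul β).exp
  have hg : HasDerivAt (fun s => ∑ i, (u i + s * v i) * Real.exp (β * (u i + s * v i)))
      (∑ i, (v i * Real.exp (β * w i) + w i * (Real.exp (β * w i) * (β * v i)))) t :=
    HasDerivAt.fun_sum fun i _ => (hlin i).mul (hexp i)
  have hh : HasDerivAt (fun s => ∑ i, Real.exp (β * (u i + s * v i)))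
      (∑ i, Real.exp (β * w i) * (β * v i)) t :=
    HasDerivAt.fun_sum fun i _ => hexp i
  have hdiv := hg.div hh hS.ne'
  have key : ∑ k, smPartial N β w k * v k
      = ((∑ i, (v i * Real.exp (β * w i) + w i * (Real.exp (β * w i) * (β * v i)))) * S
          - G * (∑ i, Real.exp (β * w i) * (β * v i))) / S ^ 2 := by
    rw [Finset.sum_mul, Finset.mul_sum, ← Finset.sum_sub_distrib, Finset.sum_div]
    refine Finset.sum_congr rfl fun k _ => ?_
    simp only [smPartial, smw, sm, ← hGdef, ← hSdefS]
    field_simp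
    ring
  rw [show (fun s => sm N β (fun i => u i + s * v i))
      = fun s => (∑ i, (u i + s * v i) * Real.exp (β * (u i + s * v i))) /
          ∑ i, Real.exp (β * (u i + s * v i)) from rfl, key]
  exact hdiv

lemma measurable_sm_comp {α : Type*} [MeasurableSpace α] (N : ℕ) (β : ℝ)
    {f : Fin N → α → ℝ} (hf : ∀ i, Measurable (f i)) :
    Measurable fun x => sm N β (fun i => f i x) := by
  unfold sm
  exact (Finset.measurable_sum _ fun i _ => (hf i).mul (measurable_const.mul (hf i)).exp).div
    (Finset.measurable_sum _ fun i _ => (measurable_const.mul (hf i)).exp)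

lemma measurable_smPartial_comp {α : Type*} [MeasurableSpace α] (N : ℕ) (β : ℝ)
    {f : Fin N → α → ℝ} (hf : ∀ i, Measurable (f i)) (k : Fin N) :
    Measurable fun x => smPartial N β (fun i => f i x) k := by
  unfold smPartial smw
  exact (((measurable_const.mul (hf k)).exp).div
      (Finset.measurable_sum _ fun i _ => (measurable_const.mul (hf i)).exp)).mul
    (measurable_const.add (measurable_const.mul ((hf k).sub (measurable_sm_comp N β hf))))

lemma integrable_of_bdd {Ω' : Type*} [MeasurableSpace Ω'] {μ : Measure Ω'} [IsFiniteMeasure μ]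
    {f : Ω' → ℝ} {C : ℝ} (hf : AEStronglyMeasurable f μ) (h : ∀ ω, |f ω| ≤ C) :
    Integrable f μ :=
  (integrable_const C).mono' hf (Filter.Eventually.of_forall fun ω => by
    simpa [Real.norm_eq_abs] using h ω)

lemma integral_mul_eq_of_condexp {Ω' : Type*} [m0 : MeasurableSpace Ω'] (μ : Measure Ω')
    [IsProbabilityMeasure μ] {m : MeasurableSpace Ω'} (hm : m ≤ m0) {g Z W : Ω' → ℝ}
    (hg : StronglyMeasurable[m] g) {Cg : ℝ} (hgb : ∀ ω, |g ω| ≤ Cg)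
    (hZ : Integrable Z μ) (hW : W =ᵐ[μ] μ[Z|m]) :
    ∫ ω, g ω * Z ω ∂μ = ∫ ω, g ω * W ω ∂μ := by
  have hgZ : Integrable (g * Z) μ :=
    hZ.bdd_mul (hg.mono hm).aestronglyMeasurable
      (Filter.Eventually.of_forall fun ω => by simpa [Real.norm_eq_abs] using hgb ω)
  have h1 := condExp_mul_of_stronglyMeasurable_left hg hgZ hZ
  calc ∫ ω, g ω * Z ω ∂μ = ∫ ω, (g * Z) ω ∂μ := rfl
    _ = ∫ ω, (μ[g * Z|m]) ω ∂μ := (integral_condExp hm).symm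
    _ = ∫ ω, (g * μ[Z|m]) ω ∂μ := integral_congr_ae h1
    _ = ∫ ω, g ω * W ω ∂μ := integral_congr_ae (hW.mono fun ω h => by
        simp only [Pi.mul_apply, h])

lemma abs_mul_le_of_le {a b c d : ℝ} (h1 : |a| ≤ c) (h2 : |b| ≤ d) : |a * b| ≤ c * d := by
  rw [abs_mul]
  exact mul_le_mul h1 h2 (abs_nonneg _) ((abs_nonneg _).trans h1)

end Helpers

/-- for the smoothed de-biased score with true nuisances
`(Q*, α^β)`, (i) `V^β = E[sm^β(Q*(·,X))] = E[Ψ^β(Z; Q*, α^β)]`, and (ii) the score is Neyman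
orthogonal at `(Q*, α^β)`: the Gateaux derivatives in every bounded measurable direction
(for the `Q` nuisance and for the `α` nuisances) vanish. -/
theorem smoothed_score_unbiased_and_neyman_orthogonal
    {Ω 𝒳 : Type*} [MeasurableSpace Ω] [MeasurableSpace 𝒳]
    (μ : Measure Ω) [IsProbabilityMeasure μ]
    (N : ℕ) (hN : 2 ≤ N)
    (X : Ω → 𝒳) (A : Ω → Fin N) (Y : Ω → ℝ)
    (hX : Measurable X) (hA : Measurable A) (hY : Measurable Y)
    (Qstar pstar : Fin N → 𝒳 → ℝ)
    (hQmeas : ∀ a, Measurable (Qstar a)) (hpmeas : ∀ a, Measurable (pstar a))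
    (η : ℝ) (hη : 0 < η)
    (hpos : ∀ a x, η ≤ pstar a x ∧ pstar a x ≤ 1 - η)
    (B : ℝ) (hYb : ∀ ω, |Y ω| ≤ B) (hQb : ∀ a x, |Qstar a x| ≤ B)
    (hpcond : ∀ a : Fin N, (fun ω => pstar a (X ω)) =ᵐ[μ]
      μ[(fun ω => if A ω = a then (1:ℝ) else 0) | MeasurableSpace.comap X inferInstance])
    (hQcond : (fun ω => Qstar (A ω) (X ω)) =ᵐ[μ]
      μ[Y | MeasurableSpace.comap (fun ω => (A ω, X ω)) inferInstance])
    (β : ℝ) (hβ : 0 < β) :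
    (∫ ω, sm N β (fun ℓ => Qstar ℓ (X ω)) ∂μ
        = ∫ ω, scoreSm N β Qstar (alphaBeta N β Qstar pstar) (X ω, A ω, Y ω) ∂μ) ∧
    (∀ ωd : Fin N × 𝒳 → ℝ, Measurable ωd → (∃ C : ℝ, ∀ w, |ωd w| ≤ C) →
      HasDerivAt (fun t : ℝ => ∫ ω, scoreSm N β
          (fun a x => Qstar a x + t * ωd (a, x)) (alphaBeta N β Qstar pstar)
          (X ω, A ω, Y ω) ∂μ) 0 0) ∧
    (∀ ωα : Fin N → Fin N × 𝒳 → ℝ, (∀ ℓ, Measurable (ωα ℓ)) →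
        (∃ C : ℝ, ∀ ℓ w, |ωα ℓ w| ≤ C) →
      HasDerivAt (fun t : ℝ => ∫ ω, scoreSm N β Qstar
          (fun ℓ w => alphaBeta N β Qstar pstar ℓ w + t * ωα ℓ w)
          (X ω, A ω, Y ω) ∂μ) 0 0) := by
  have hNpos : 0 < N := by omega
  haveI : Nonempty (Fin N) := ⟨⟨0, hNpos⟩⟩
  set αs := alphaBeta N β Qstar pstar with hαs
  set K : ℝ := (1 + 2 * β * B) / η with hK
  -- basic measurability and bounds
  have habs_sum : ∀ (h : Fin N → ℝ) (c : ℝ), (∀ ℓ, |h ℓ| ≤ c) → |∑ ℓ, h ℓ| ≤ N * c := by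
    intro h c hc
    calc |∑ ℓ, h ℓ| ≤ ∑ ℓ, |h ℓ| := Finset.abs_sum_le_sum_abs _ _
      _ ≤ ∑ _ℓ : Fin N, c := Finset.sum_le_sum fun ℓ _ => hc ℓ
      _ = N * c := by simp [Finset.sum_const, nsmul_eq_mul]
  have hQX : ∀ i, Measurable fun ω => Qstar i (X ω) := fun i => (hQmeas i).comp hX
  have hsmX : Measurable fun ω => sm N β (fun ℓ => Qstar ℓ (X ω)) := measurable_sm_comp N β hQX
  have hsmb : ∀ ω, |sm N β (fun ℓ => Qstar ℓ (X ω))| ≤ B := fun ω =>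
    abs_sm_le N hNpos β _ B (fun i => hQb i (X ω))
  have hQAXm : Measurable fun ω => Qstar (A ω) (X ω) := by
    have : (fun ω => Qstar (A ω) (X ω)) = fun ω => ∑ ℓ, if A ω = ℓ then Qstar ℓ (X ω) else 0 := by
      funext ω; rw [Finset.sum_ite_eq]; simp
    rw [this]
    exact Finset.measurable_sum _ fun ℓ _ =>
      Measurable.ite (hA (measurableSet_singleton ℓ)) ((hQmeas ℓ).comp hX) measurable_const
  have hsmPX : ∀ k, Measurable fun x : 𝒳 => smPartial N β (fun ℓ => Qstar ℓ x) k := fun k =>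
    measurable_smPartial_comp N β (fun i => hQmeas i) k
  have hαmeas : ∀ ℓ, Measurable (αs ℓ) := by
    intro ℓ
    show Measurable fun w : Fin N × 𝒳 =>
      smPartial N β (fun i => Qstar i w.2) ℓ * (if w.1 = ℓ then 1 else 0) / pstar ℓ w.2
    exact (((hsmPX ℓ).comp measurable_snd).mul
        (Measurable.ite (measurable_fst (measurableSet_singleton ℓ)) measurable_const
          measurable_const)).div ((hpmeas ℓ).comp measurable_snd)
  have hspb : ∀ (x : 𝒳) (k : Fin N), |smPartial N β (fun i => Qstar i x) k| ≤ 1 + 2 * β * B :=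
    fun x k => abs_smPartial_le N hNpos β hβ.le _ B (fun i => hQb i x) k
  have hαb : ∀ ℓ (w : Fin N × 𝒳), |αs ℓ w| ≤ K := by
    intro ℓ w
    have hp := (hpos ℓ w.2).1
    show |smPartial N β (fun i => Qstar i w.2) ℓ * (if w.1 = ℓ then 1 else 0) / pstar ℓ w.2| ≤ K
    rw [abs_div, abs_of_pos (hη.trans_le hp), hK]
    refine div_le_div₀ ?_ ?_ hη hp
    · exact (abs_nonneg _).trans (hspb w.2 ℓ)
    · calc |smPartial N β (fun i => Qstar i w.2) ℓ * (if w.1 = ℓ then 1 else 0)|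
          ≤ (1 + 2 * β * B) * 1 :=
            abs_mul_le_of_le (hspb w.2 ℓ) (by split <;> simp)
        _ = 1 + 2 * β * B := mul_one _
  have hYint : Integrable Y μ := integrable_of_bdd hY.aestronglyMeasurable hYb
  -- key conditional-expectation identities
  have key1 : ∀ (f : Fin N × 𝒳 → ℝ) (C : ℝ), Measurable f → (∀ w, |f w| ≤ C) →
      ∫ ω, f (A ω, X ω) * (Y ω - Qstar (A ω) (X ω)) ∂μ = 0 := by
    intro f C hf hfb
    have hg : StronglyMeasurable[MeasurableSpace.comap (fun ω => (A ω, X ω)) inferInstance]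
        (fun ω => f (A ω, X ω)) :=
      (hf.comp (comap_measurable (fun ω => (A ω, X ω)))).stronglyMeasurable
    have heq := integral_mul_eq_of_condexp μ (hA.prodMk hX).comap_le hg
      (fun ω => hfb (A ω, X ω)) hYint hQcond
    have hint1 : Integrable (fun ω => f (A ω, X ω) * Y ω) μ :=
      integrable_of_bdd ((hf.comp (hA.prodMk hX)).mul hY).aestronglyMeasurable
        (fun ω => abs_mul_le_of_le (hfb _) (hYb ω))
    have hint2 : Integrable (fun ω => f (A ω, X ω) * Qstar (A ω) (X ω)) μ :=
      integrable_of_bdd ((hf.comp (hA.prodMk hX)).mul hQAXm).aestronglyMeasurable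
        (fun ω => abs_mul_le_of_le (hfb _) (hQb _ _))
    calc ∫ ω, f (A ω, X ω) * (Y ω - Qstar (A ω) (X ω)) ∂μ
        = ∫ ω, (f (A ω, X ω) * Y ω - f (A ω, X ω) * Qstar (A ω) (X ω)) ∂μ := by
          refine integral_congr_ae (Filter.Eventually.of_forall fun ω => ?_); ring
      _ = (∫ ω, f (A ω, X ω) * Y ω ∂μ) - ∫ ω, f (A ω, X ω) * Qstar (A ω) (X ω) ∂μ :=
          integral_sub hint1 hint2
      _ = 0 := by rw [heq]; exact sub_self _
  have key2 : ∀ (φ : 𝒳 → ℝ) (C : ℝ) (ℓ : Fin N), Measurable φ → (∀ x, |φ x| ≤ C) →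
      ∫ ω, φ (X ω) * (if A ω = ℓ then (1:ℝ) else 0) ∂μ = ∫ ω, φ (X ω) * pstar ℓ (X ω) ∂μ := by
    intro φ C ℓ hφ hφb
    exact integral_mul_eq_of_condexp μ hX.comap_le
      ((hφ.comp (comap_measurable X)).stronglyMeasurable) (fun ω => hφb _)
      (integrable_of_bdd
        (Measurable.ite (hA (measurableSet_singleton ℓ)) measurable_const
          measurable_const).aestronglyMeasurable (C := 1) (fun ω => by split <;> simp))
      (hpcond ℓ)
  -- integrability of the score pieces at the truth
  have hsmint : Integrable (fun ω => sm N β (fun ℓ => Qstar ℓ (X ω))) μ :=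
    integrable_of_bdd hsmX.aestronglyMeasurable hsmb
  have hcorrb : ∀ ω, |∑ ℓ, αs ℓ (A ω, X ω) * (Y ω - Qstar (A ω) (X ω))| ≤ N * (K * (B + B)) := by
    intro ω
    refine habs_sum _ _ fun ℓ => abs_mul_le_of_le (hαb ℓ _) ?_
    calc |Y ω - Qstar (A ω) (X ω)| ≤ |Y ω| + |Qstar (A ω) (X ω)| := abs_sub _ _
      _ ≤ B + B := add_le_add (hYb ω) (hQb _ _)
  have hcorrm : Measurable fun ω => ∑ ℓ, αs ℓ (A ω, X ω) * (Y ω - Qstar (A ω) (X ω)) :=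
    Finset.measurable_sum _ fun ℓ _ =>
      ((hαmeas ℓ).comp (hA.prodMk hX)).mul (hY.sub hQAXm)
  have hcorrint : Integrable (fun ω => ∑ ℓ, αs ℓ (A ω, X ω) * (Y ω - Qstar (A ω) (X ω))) μ :=
    integrable_of_bdd hcorrm.aestronglyMeasurable hcorrb
  have hcorr0 : ∫ ω, (∑ ℓ, αs ℓ (A ω, X ω) * (Y ω - Qstar (A ω) (X ω))) ∂μ = 0 := by
    have h := key1 (fun w => ∑ ℓ, αs ℓ w) (N * K)
      (Finset.measurable_sum _ fun ℓ _ => hαmeas ℓ)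
      (fun w => habs_sum _ _ fun ℓ => hαb ℓ w)
    rw [← h]
    refine integral_congr_ae (Filter.Eventually.of_forall fun ω => ?_)
    simp only [Finset.sum_mul]
  have hscoreint : Integrable (fun ω => scoreSm N β Qstar αs (X ω, A ω, Y ω)) μ := by
    simp only [scoreSm]; exact hsmint.add hcorrint
  have part1 : ∫ ω, sm N β (fun ℓ => Qstar ℓ (X ω)) ∂μ
      = ∫ ω, scoreSm N β Qstar αs (X ω, A ω, Y ω) ∂μ := by
    have h : ∫ ω, scoreSm N β Qstar αs (X ω, A ω, Y ω) ∂μ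
        = (∫ ω, sm N β (fun ℓ => Qstar ℓ (X ω)) ∂μ)
          + ∫ ω, (∑ ℓ, αs ℓ (A ω, X ω) * (Y ω - Qstar (A ω) (X ω))) ∂μ := by
      simp only [scoreSm]; exact integral_add hsmint hcorrint
    rw [h, hcorr0, add_zero]
  refine ⟨part1, ?_, ?_⟩
  · -- Neyman orthogonality in the Q direction
    intro ωd hωd hCex
    obtain ⟨C, hC⟩ := hCex
    have hωX : ∀ i, Measurable fun ω => ωd (i, X ω) := fun i =>
      hωd.comp (measurable_const.prodMk hX)
    have hωAX : Measurable fun ω => ωd (A ω, X ω) := hωd.comp (hA.prodMk hX)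
    set F : ℝ → Ω → ℝ := fun t ω =>
      scoreSm N β (fun a x => Qstar a x + t * ωd (a, x)) αs (X ω, A ω, Y ω) with hFdef
    set F' : ℝ → Ω → ℝ := fun t ω =>
      (∑ k, smPartial N β (fun i => Qstar i (X ω) + t * ωd (i, X ω)) k * ωd (k, X ω))
      - ∑ ℓ, αs ℓ (A ω, X ω) * ωd (A ω, X ω) with hF'def
    have hQtb : ∀ t : ℝ, |t| ≤ 1 → ∀ (i : Fin N) (ω : Ω),
        |Qstar i (X ω) + t * ωd (i, X ω)| ≤ B + C := by
      intro t ht i ω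
      calc |Qstar i (X ω) + t * ωd (i, X ω)|
          ≤ |Qstar i (X ω)| + |t * ωd (i, X ω)| := abs_add_le _ _
        _ ≤ B + 1 * C := add_le_add (hQb _ _) (abs_mul_le_of_le ht (hC _))
        _ = B + C := by ring
    have hFmeas : ∀ t : ℝ, AEStronglyMeasurable (F t) μ := by
      intro t
      refine Measurable.aestronglyMeasurable ?_
      show Measurable fun ω => sm N β (fun ℓ => Qstar ℓ (X ω) + t * ωd (ℓ, X ω))
        + ∑ ℓ, αs ℓ (A ω, X ω) * (Y ω - (Qstar (A ω) (X ω) + t * ωd (A ω, X ω)))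
      exact (measurable_sm_comp N β fun i => (hQX i).add (measurable_const.mul (hωX i))).add
        (Finset.measurable_sum _ fun ℓ _ =>
          ((hαmeas ℓ).comp (hA.prodMk hX)).mul
            (hY.sub (hQAXm.add (measurable_const.mul hωAX))))
    have hFint : Integrable (F 0) μ := by
      refine integrable_of_bdd (hFmeas 0) (C := (B + C) + N * (K * (B + (B + C)))) fun ω => ?_
      show |sm N β (fun ℓ => Qstar ℓ (X ω) + 0 * ωd (ℓ, X ω))
          + ∑ ℓ, αs ℓ (A ω, X ω) * (Y ω - (Qstar (A ω) (X ω) + 0 * ωd (A ω, X ω)))| ≤ _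
      refine (abs_add_le _ _).trans (add_le_add ?_ ?_)
      · exact abs_sm_le N hNpos β _ (B + C) fun i => hQtb 0 (by norm_num) i ω
      · refine habs_sum _ _ fun ℓ => abs_mul_le_of_le (hαb ℓ _) ?_
        calc |Y ω - (Qstar (A ω) (X ω) + 0 * ωd (A ω, X ω))|
            ≤ |Y ω| + |Qstar (A ω) (X ω) + 0 * ωd (A ω, X ω)| := abs_sub _ _
          _ ≤ B + (B + C) := add_le_add (hYb ω) (hQtb 0 (by norm_num) _ ω)
    have hF'meas : AEStronglyMeasurable (F' 0) μ := by
      refine Measurable.aestronglyMeasurable ?_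
      show Measurable fun ω =>
        (∑ k, smPartial N β (fun i => Qstar i (X ω) + 0 * ωd (i, X ω)) k * ωd (k, X ω))
        - ∑ ℓ, αs ℓ (A ω, X ω) * ωd (A ω, X ω)
      exact (Finset.measurable_sum _ fun k _ =>
          (measurable_smPartial_comp N β
            (fun i => (hQX i).add (measurable_const.mul (hωX i))) k).mul (hωX k)).sub
        (Finset.measurable_sum _ fun ℓ _ => ((hαmeas ℓ).comp (hA.prodMk hX)).mul hωAX)
    have hbound : ∀ ω, ∀ t ∈ Metric.ball (0:ℝ) 1,
        ‖F' t ω‖ ≤ N * ((1 + 2 * β * (B + C)) * C) + N * (K * C) := by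
      intro ω t ht
      have ht1 : |t| ≤ 1 := by
        rw [Metric.mem_ball, Real.dist_eq, sub_zero] at ht; exact ht.le
      rw [Real.norm_eq_abs]
      show |(∑ k, smPartial N β (fun i => Qstar i (X ω) + t * ωd (i, X ω)) k * ωd (k, X ω))
          - ∑ ℓ, αs ℓ (A ω, X ω) * ωd (A ω, X ω)| ≤ _
      refine (abs_sub _ _).trans (add_le_add ?_ ?_)
      · refine habs_sum _ _ fun k => abs_mul_le_of_le ?_ (hC _)
        exact abs_smPartial_le N hNpos β hβ.le _ (B + C) (fun i => hQtb t ht1 i ω) k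
      · exact habs_sum _ _ fun ℓ => abs_mul_le_of_le (hαb ℓ _) (hC _)
    have hdiff : ∀ ω, ∀ t ∈ Metric.ball (0:ℝ) 1, HasDerivAt (F · ω) (F' t ω) t := by
      intro ω t _
      have h1 := hasDerivAt_sm N hNpos β (fun i => Qstar i (X ω)) (fun i => ωd (i, X ω)) t
      have h2 : HasDerivAt (fun s => ∑ ℓ, αs ℓ (A ω, X ω)
          * (Y ω - (Qstar (A ω) (X ω) + s * ωd (A ω, X ω))))
          (∑ ℓ, αs ℓ (A ω, X ω) * -ωd (A ω, X ω)) t :=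
        HasDerivAt.fun_sum fun ℓ _ =>
          ((((hasDerivAt_mul_const (ωd (A ω, X ω))).const_add
            (Qstar (A ω) (X ω))).const_sub (Y ω)).const_mul _)
      have h3 := h1.add h2
      have he : F' t ω = (∑ k, smPartial N β (fun i => Qstar i (X ω) + t * ωd (i, X ω)) k
            * ωd (k, X ω)) + ∑ ℓ, αs ℓ (A ω, X ω) * -ωd (A ω, X ω) := by
        simp only [hF'def, mul_neg, Finset.sum_neg_distrib, sub_eq_add_neg]
      rw [he]
      exact h3
    have main := hasDerivAt_integral_of_dominated_loc_of_deriv_le (μ := μ) (Metric.ball_mem_nhds 0 zero_lt_one)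
      (Filter.Eventually.of_forall hFmeas) hFint hF'meas
      (Filter.Eventually.of_forall hbound) (integrable_const _)
      (Filter.Eventually.of_forall hdiff)
    have hz : ∫ ω, F' 0 ω ∂μ = 0 := by
      have hm1 : Measurable fun ω => ∑ k, smPartial N β (fun i => Qstar i (X ω)) k * ωd (k, X ω) :=
        Finset.measurable_sum _ fun k _ => ((hsmPX k).comp hX).mul (hωX k)
      have hint1 : Integrable
          (fun ω => ∑ k, smPartial N β (fun i => Qstar i (X ω)) k * ωd (k, X ω)) μ :=
        integrable_of_bdd hm1.aestronglyMeasurable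
          (fun ω => habs_sum _ _ fun k => abs_mul_le_of_le (hspb (X ω) k) (hC _))
      have hint2 : Integrable (fun ω => ∑ ℓ, αs ℓ (A ω, X ω) * ωd (A ω, X ω)) μ :=
        integrable_of_bdd (Finset.measurable_sum _ fun ℓ _ =>
            ((hαmeas ℓ).comp (hA.prodMk hX)).mul hωAX).aestronglyMeasurable
          (fun ω => habs_sum _ _ fun ℓ => abs_mul_le_of_le (hαb ℓ _) (hC _))
      have e0 : ∫ ω, F' 0 ω ∂μ
          = (∫ ω, ∑ k, smPartial N β (fun i => Qstar i (X ω)) k * ωd (k, X ω) ∂μ)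
            - ∫ ω, ∑ ℓ, αs ℓ (A ω, X ω) * ωd (A ω, X ω) ∂μ := by
        rw [show ∫ ω, F' 0 ω ∂μ
            = ∫ ω, ((∑ k, smPartial N β (fun i => Qstar i (X ω)) k * ωd (k, X ω))
              - ∑ ℓ, αs ℓ (A ω, X ω) * ωd (A ω, X ω)) ∂μ from
          integral_congr_ae (.of_forall fun ω => by simp [hF'def])]
        exact integral_sub hint1 hint2
      have hφm : ∀ ℓ : Fin N, Measurable fun x =>
          smPartial N β (fun i => Qstar i x) ℓ * ωd (ℓ, x) / pstar ℓ x := fun ℓ =>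
        ((hsmPX ℓ).mul (hωd.comp (measurable_const.prodMk measurable_id))).div (hpmeas ℓ)
      have hφb : ∀ (ℓ : Fin N) (x : 𝒳),
          |smPartial N β (fun i => Qstar i x) ℓ * ωd (ℓ, x) / pstar ℓ x|
            ≤ (1 + 2 * β * B) * C / η := by
        intro ℓ x
        rw [abs_div, abs_of_pos (hη.trans_le (hpos ℓ x).1)]
        exact div_le_div₀ ((abs_nonneg _).trans (abs_mul_le_of_le (hspb x ℓ) (hC (ℓ, x))))
          (abs_mul_le_of_le (hspb x ℓ) (hC (ℓ, x))) hη (hpos ℓ x).1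
      have hterm : ∀ (ℓ : Fin N) (ω : Ω), αs ℓ (A ω, X ω) * ωd (A ω, X ω)
          = (smPartial N β (fun i => Qstar i (X ω)) ℓ * ωd (ℓ, X ω) / pstar ℓ (X ω))
            * (if A ω = ℓ then (1:ℝ) else 0) := by
        intro ℓ ω
        by_cases h : A ω = ℓ
        · simp only [hαs, alphaBeta, h, if_true, eq_self_iff_true]
          ring
        · simp [hαs, alphaBeta, h]
      have e2 : ∫ ω, ∑ ℓ, αs ℓ (A ω, X ω) * ωd (A ω, X ω) ∂μ
          = ∫ ω, ∑ k, smPartial N β (fun i => Qstar i (X ω)) k * ωd (k, X ω) ∂μ := by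
        calc ∫ ω, ∑ ℓ, αs ℓ (A ω, X ω) * ωd (A ω, X ω) ∂μ
            = ∑ ℓ, ∫ ω, (smPartial N β (fun i => Qstar i (X ω)) ℓ * ωd (ℓ, X ω) / pstar ℓ (X ω))
                * (if A ω = ℓ then (1:ℝ) else 0) ∂μ := by
              rw [show (fun ω => ∑ ℓ, αs ℓ (A ω, X ω) * ωd (A ω, X ω))
                  = fun ω => ∑ ℓ, (smPartial N β (fun i => Qstar i (X ω)) ℓ * ωd (ℓ, X ω)
                    / pstar ℓ (X ω)) * (if A ω = ℓ then (1:ℝ) else 0) from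
                funext fun ω => Finset.sum_congr rfl fun ℓ _ => hterm ℓ ω]
              exact integral_finset_sum _ fun ℓ _ => integrable_of_bdd
                (((hφm ℓ).comp hX).mul (Measurable.ite (hA (measurableSet_singleton ℓ))
                  measurable_const measurable_const)).aestronglyMeasurable
                (fun ω => abs_mul_le_of_le (hφb ℓ (X ω))
                  (show |(if A ω = ℓ then (1:ℝ) else 0)| ≤ 1 by split <;> simp))
          _ = ∑ ℓ, ∫ ω, (smPartial N β (fun i => Qstar i (X ω)) ℓ * ωd (ℓ, X ω)
                / pstar ℓ (X ω)) * pstar ℓ (X ω) ∂μ :=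
              Finset.sum_congr rfl fun ℓ _ => key2 _ _ ℓ (hφm ℓ) (hφb ℓ)
          _ = ∑ ℓ, ∫ ω, smPartial N β (fun i => Qstar i (X ω)) ℓ * ωd (ℓ, X ω) ∂μ :=
              Finset.sum_congr rfl fun ℓ _ => integral_congr_ae (.of_forall fun ω =>
                div_mul_cancel₀ _ (hη.trans_le (hpos ℓ (X ω)).1).ne')
          _ = ∫ ω, ∑ k, smPartial N β (fun i => Qstar i (X ω)) k * ωd (k, X ω) ∂μ :=
              (integral_finset_sum _ fun k _ => integrable_of_bdd
                (((hsmPX k).comp hX).mul (hωX k)).aestronglyMeasurable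
                (fun ω => abs_mul_le_of_le (hspb (X ω) k) (hC _))).symm
      rw [e0, e2, sub_self]
    have hfin := main.2
    rw [hz] at hfin
    exact hfin
  · -- Neyman orthogonality in the α direction
    intro ωα hωαm hCex
    obtain ⟨C, hC⟩ := hCex
    have hGzero : ∫ ω, (∑ ℓ, ωα ℓ (A ω, X ω)) * (Y ω - Qstar (A ω) (X ω)) ∂μ = 0 :=
      key1 (fun w => ∑ ℓ, ωα ℓ w) (N * C)
        (Finset.measurable_sum _ fun ℓ _ => hωαm ℓ)
        (fun w => habs_sum _ _ fun ℓ => hC ℓ w)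
    have hGint : Integrable (fun ω => (∑ ℓ, ωα ℓ (A ω, X ω)) * (Y ω - Qstar (A ω) (X ω))) μ :=
      integrable_of_bdd ((Finset.measurable_sum _ fun ℓ _ =>
          (hωαm ℓ).comp (hA.prodMk hX)).mul (hY.sub hQAXm)).aestronglyMeasurable
        (fun ω => abs_mul_le_of_le (habs_sum _ _ fun ℓ => hC ℓ _)
          ((abs_sub _ _).trans (add_le_add (hYb ω) (hQb _ _))))
    have hconst : (fun t : ℝ => ∫ ω, scoreSm N β Qstar
        (fun ℓ w => αs ℓ w + t * ωα ℓ w) (X ω, A ω, Y ω) ∂μ)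
        = fun _ => ∫ ω, scoreSm N β Qstar αs (X ω, A ω, Y ω) ∂μ := by
      funext t
      have hpt : ∀ ω : Ω, scoreSm N β Qstar (fun ℓ w => αs ℓ w + t * ωα ℓ w) (X ω, A ω, Y ω)
          = scoreSm N β Qstar αs (X ω, A ω, Y ω)
            + t * ((∑ ℓ, ωα ℓ (A ω, X ω)) * (Y ω - Qstar (A ω) (X ω))) := by
        intro ω
        simp only [scoreSm, add_mul, Finset.sum_add_distrib, Finset.sum_mul, Finset.mul_sum,
          mul_assoc, add_assoc]
      rw [show (fun ω => scoreSm N β Qstar (fun ℓ w => αs ℓ w + t * ωα ℓ w) (X ω, A ω, Y ω))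
          = fun ω => scoreSm N β Qstar αs (X ω, A ω, Y ω)
            + t * ((∑ ℓ, ωα ℓ (A ω, X ω)) * (Y ω - Qstar (A ω) (X ω))) from funext hpt]
      rw [integral_add hscoreint (hGint.const_mul t), integral_const_mul, hGzero,
        mul_zero, add_zero]
    rw [hconst]
    exact hasDerivAt_const 0 _
end
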